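/- arXiv:1910.01312 — 8 statements merged into one kernel-verified Lean document; each statement's English description precedes it below -/
import Mathlib

section
/- Assume K∩L is nonempty and Z ≠ ∅. Then for every r > 0 there exists κ > 0 such that for every x ∈ ℝⁿ with dist(x, Z) ≤ r and every w ∈ T_f(x), one has dist(x, Z) ≤ κ‖w‖. -/
open RealInnerProductSpace

variable {n : ℕ}

/-- The box `K = {x | l ≤ x ≤ u}`. -/
def boxK (l u : EuclideanSpace ℝ (Fin n)) : Set (EuclideanSpace ℝ (Fin n)) :=
  {x | ∀ i, l i ≤ x i ∧ x i ≤ u i}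

/-- The hyperplane `L = {x | ⟪a,x⟫ = d}`. -/
def hypL (a : EuclideanSpace ℝ (Fin n)) (d : ℝ) : Set (EuclideanSpace ℝ (Fin n)) :=
  {x | ⟪a, x⟫ = d}

/-- The normal cone of `K ∩ L` at `x` (empty if `x ∉ K ∩ L`). -/
def normalCone (l u a : EuclideanSpace ℝ (Fin n)) (d : ℝ) (x : EuclideanSpace ℝ (Fin n)) :
    Set (EuclideanSpace ℝ (Fin n)) :=
  {v | x ∈ boxK l u ∩ hypL a d ∧ ∀ z ∈ boxK l u ∩ hypL a d, ⟪v, z - x⟫ ≤ 0}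

/-- The set-valued map `T_f(x) = Qx + c + N_{K∩L}(x)`. -/
def Tf (l u a : EuclideanSpace ℝ (Fin n)) (d : ℝ) (Q : Matrix (Fin n) (Fin n) ℝ)
    (c : EuclideanSpace ℝ (Fin n)) (x : EuclideanSpace ℝ (Fin n)) :
    Set (EuclideanSpace ℝ (Fin n)) :=
  {w | ∃ v ∈ normalCone l u a d x, w = Matrix.toEuclideanLin Q x + c + v}

/-- The solution set `Z = T_f⁻¹(0)`. -/
def solSet (l u a : EuclideanSpace ℝ (Fin n)) (d : ℝ) (Q : Matrix (Fin n) (Fin n) ℝ)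
    (c : EuclideanSpace ℝ (Fin n)) : Set (EuclideanSpace ℝ (Fin n)) :=
  {x | (0 : EuclideanSpace ℝ (Fin n)) ∈ Tf l u a d Q c x}

/-!
Let `S = K ∩ L` and `g = Qz + c` for `z ∈ Z`; positive semidefiniteness makes `Qz`, hence `g`,
independent of the solution `z`. If the bound failed on `dist(x, Z) ≤ r`, there would be points
`xₖ = zₖ + tₖ vₖ` with `zₖ` nearest in `Z`, `‖vₖ‖ = 1` and `‖wₖ‖ = o(tₖ)` for some `wₖ ∈ T_f(xₖ)`.
Monotonicity of `T_f` gives `⟪g, vₖ⟫ + tₖ ⟪vₖ, Qvₖ⟫ ≤ ‖wₖ‖`, so a limit direction `v` of the `vₖ`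
satisfies `⟪g, v⟫ = 0`, `Qv = 0` and `⟪a, v⟫ = 0`. Since `S` is polyhedral, `zₖ + (tₖ/2) v` stays in
`S` for large `k`; it then lies in `Z`, yet is closer to `xₖ` than `tₖ = dist(xₖ, Z)`.
-/

open Filter Topology Metric Set Matrix

theorem Matrix.PosSemidef.toEuclideanLin_eq_zero_of_inner_eq_zero {ι : Type*} [Fintype ι]
    [DecidableEq ι] {Q : Matrix ι ι ℝ} (hQ : Q.PosSemidef) {x : EuclideanSpace ℝ ι}
    (hx : ⟪x, toEuclideanLin Q x⟫ = 0) : toEuclideanLin Q x = 0 := by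
  have := (hQ.dotProduct_mulVec_zero_iff x.ofLp).1 <| by
    simpa [EuclideanSpace.inner_eq_star_dotProduct, dotProduct_comm] using hx
  rw [toLpLin_apply, this]
  rfl

theorem eventually_half_mem_uIcc {α : Type*} {l : Filter α} {f : α → ℝ} {a : ℝ}
    (hf : Tendsto f l (𝓝 a)) : ∀ᶠ k in l, a / 2 ∈ uIcc 0 (f k) := by
  rcases lt_trichotomy a 0 with ha | rfl | ha
  · filter_upwards [hf.eventually_lt_const (by linarith : a < a / 2)] with k hk
    exact mem_uIcc.2 (Or.inr ⟨hk.le, by linarith⟩)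
  · simp
  · filter_upwards [hf.eventually_const_lt (by linarith : a / 2 < a)] with k hk
    exact mem_uIcc.2 (Or.inl ⟨by linarith, hk.le⟩)

section QuadraticProgram

variable {l u a : EuclideanSpace ℝ (Fin n)} {d : ℝ} {Q : Matrix (Fin n) (Fin n) ℝ}
  {c x z : EuclideanSpace ℝ (Fin n)}

theorem isClosed_boxK : IsClosed (boxK l u) := by
  simp only [boxK, ofPred_forall, ofPred_and]
  exact isClosed_iInter fun i => (isClosed_le continuous_const (PiLp.continuous_apply 2 _ i)).inter
    (isClosed_le (PiLp.continuous_apply 2 _ i) continuous_const)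

theorem isClosed_hypL : IsClosed (hypL a d) :=
  isClosed_eq (by fun_prop) continuous_const

theorem add_smul_mem_boxK_inter_hypL {v e : EuclideanSpace ℝ (Fin n)} {t : ℝ}
    (hz : z ∈ boxK l u ∩ hypL a d) (hzv : z + t • v ∈ boxK l u ∩ hypL a d) (ht : 0 ≤ t)
    (he : ∀ i, e i ∈ uIcc 0 (v i)) (hae : ⟪a, e⟫ = 0) : z + t • e ∈ boxK l u ∩ hypL a d := by
  refine ⟨fun i => ?_, ?_⟩
  · have hzi := hz.1 i
    have hzvi := hzv.1 i
    simp only [PiLp.add_apply, PiLp.smul_apply, smul_eq_mul] at hzvi ⊢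
    rcases mem_uIcc.1 (he i) with ⟨h₀, h₁⟩ | ⟨h₀, h₁⟩ <;> constructor <;> nlinarith
  · show ⟪a, z + t • e⟫ = d
    rw [inner_add_right, inner_smul_right, hae, mul_zero, add_zero]
    exact hz.2

theorem mem_solSet_iff : x ∈ solSet l u a d Q c ↔ x ∈ boxK l u ∩ hypL a d ∧
    ∀ p ∈ boxK l u ∩ hypL a d, 0 ≤ ⟪toEuclideanLin Q x + c, p - x⟫ := by
  constructor
  · rintro ⟨v, ⟨hx, hv⟩, h₀⟩
    rw [eq_comm, add_eq_zero_iff_neg_eq'] at h₀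
    exact ⟨hx, fun p hp => by simpa [← h₀, inner_neg_left] using hv p hp⟩
  · rintro ⟨hx, hp⟩
    exact ⟨-(toEuclideanLin Q x + c),
      ⟨hx, fun p h => by rw [inner_neg_left]; linarith [hp p h]⟩, by abel⟩

theorem isClosed_solSet : IsClosed (solSet l u a d Q c) := by
  have : solSet l u a d Q c = (boxK l u ∩ hypL a d) ∩
      ⋂ p ∈ boxK l u ∩ hypL a d, {x | 0 ≤ ⟪toEuclideanLin Q x + c, p - x⟫} := by
    ext x
    simp [mem_solSet_iff]
  rw [this]
  refine (isClosed_boxK.inter isClosed_hypL).inter <| isClosed_biInter fun p _ => ?_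
  have := (toEuclideanLin Q).continuous_of_finiteDimensional
  exact isClosed_le continuous_const (by fun_prop)

theorem toEuclideanLin_eq_of_mem_solSet (hQ : Q.PosSemidef) {z' : EuclideanSpace ℝ (Fin n)}
    (hz : z ∈ solSet l u a d Q c) (hz' : z' ∈ solSet l u a d Q c) :
    toEuclideanLin Q z = toEuclideanLin Q z' := by
  obtain ⟨hzS, hzVI⟩ := mem_solSet_iff.1 hz
  obtain ⟨hz'S, hz'VI⟩ := mem_solSet_iff.1 hz'
  have hle : ⟪z' - z, toEuclideanLin Q (z' - z)⟫ ≤ 0 := by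
    have h₁ := hzVI z' hz'S
    have h₂ := hz'VI z hzS
    rw [inner_add_left] at h₁
    rw [← neg_sub, inner_neg_right, inner_add_left] at h₂
    rw [map_sub, real_inner_comm, inner_sub_left]
    linarith
  have hnonneg := (isPositive_toEuclideanLin_iff.2 hQ).inner_nonneg_right (z' - z)
  have h₀ := hQ.toEuclideanLin_eq_zero_of_inner_eq_zero (le_antisymm hle hnonneg)
  rw [map_sub, sub_eq_zero] at h₀
  exact h₀.symm

theorem mem_solSet_of_toEuclideanLin_eq {y : EuclideanSpace ℝ (Fin n)}
    (hz : z ∈ solSet l u a d Q c) (hy : y ∈ boxK l u ∩ hypL a d)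
    (hQy : toEuclideanLin Q y = toEuclideanLin Q z) (hgy : ⟪toEuclideanLin Q z + c, y - z⟫ = 0) :
    y ∈ solSet l u a d Q c := by
  refine mem_solSet_iff.2 ⟨hy, fun p hp => ?_⟩
  rw [hQy, ← sub_sub_sub_cancel_right p y z, inner_sub_right, hgy, sub_zero]
  exact (mem_solSet_iff.1 hz).2 p hp

theorem inner_nonneg_of_mem_solSet {v : EuclideanSpace ℝ (Fin n)} {t : ℝ} (ht : 0 < t)
    (hz : z ∈ solSet l u a d Q c) (hx : z + t • v ∈ boxK l u ∩ hypL a d) :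
    0 ≤ ⟪toEuclideanLin Q z + c, v⟫ := by
  have := (mem_solSet_iff.1 hz).2 _ hx
  rw [add_sub_cancel_left, inner_smul_right] at this
  exact nonneg_of_mul_nonneg_right this ht

theorem inner_add_mul_inner_le_norm_of_mem_Tf {v w : EuclideanSpace ℝ (Fin n)} {t : ℝ}
    (ht : 0 < t) (hz : z ∈ solSet l u a d Q c) (hw : w ∈ Tf l u a d Q c (z + t • v))
    (hv : ‖v‖ = 1) : ⟪toEuclideanLin Q z + c, v⟫ + t * ⟪v, toEuclideanLin Q v⟫ ≤ ‖w‖ := by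
  obtain ⟨p, ⟨-, hp⟩, rfl⟩ := hw
  have hpv : 0 ≤ ⟪p, v⟫ := by
    have := hp z (mem_solSet_iff.1 hz).1
    rw [sub_add_cancel_left, inner_neg_right, inner_smul_right, neg_nonpos] at this
    exact nonneg_of_mul_nonneg_right this ht
  calc ⟪toEuclideanLin Q z + c, v⟫ + t * ⟪v, toEuclideanLin Q v⟫
      ≤ ⟪toEuclideanLin Q (z + t • v) + c + p, v⟫ := by
        simp only [map_add, map_smul, inner_add_left, real_inner_smul_left]
        rw [real_inner_comm v (toEuclideanLin Q v)]
        linarith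
    _ ≤ ‖toEuclideanLin Q (z + t • v) + c + p‖ * ‖v‖ := real_inner_le_norm _ _
    _ = _ := by rw [hv, mul_one]

theorem eventually_add_smul_half_mem_solSet {α : Type*} {f : Filter α}
    {z v : α → EuclideanSpace ℝ (Fin n)} {t : α → ℝ} {e : EuclideanSpace ℝ (Fin n)}
    (ht : ∀ k, 0 < t k) (hz : ∀ k, z k ∈ solSet l u a d Q c)
    (hS : ∀ k, z k + t k • v k ∈ boxK l u ∩ hypL a d) (hv : Tendsto v f (𝓝 e))
    (hQe : toEuclideanLin Q e = 0) (hge : ∀ k, ⟪toEuclideanLin Q (z k) + c, e⟫ = 0)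
    (hae : ⟪a, e⟫ = 0) :
    ∀ᶠ k in f, z k + t k • (2 : ℝ)⁻¹ • e ∈ solSet l u a d Q c := by
  have hcoord : ∀ᶠ k in f, ∀ i, ((2 : ℝ)⁻¹ • e) i ∈ uIcc 0 (v k i) :=
    eventually_all.2 fun i => by
      simpa [inv_mul_eq_div] using
        eventually_half_mem_uIcc (((PiLp.continuous_apply 2 _ i).tendsto e).comp hv)
  filter_upwards [hcoord] with k hk
  refine mem_solSet_of_toEuclideanLin_eq (hz k) ?_ ?_ ?_
  · refine add_smul_mem_boxK_inter_hypL (mem_solSet_iff.1 (hz k)).1 (hS k) (ht k).le hk ?_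
    rw [inner_smul_right, hae, mul_zero]
  · rw [map_add, map_smul, map_smul, hQe, smul_zero, smul_zero, add_zero]
  · rw [add_sub_cancel_left, inner_smul_right, inner_smul_right, hge, mul_zero, mul_zero]

theorem inner_eq_zero_of_add_smul_mem_hypL {v : EuclideanSpace ℝ (Fin n)} {t : ℝ} (ht : t ≠ 0)
    (hz : z ∈ hypL a d) (hzv : z + t • v ∈ hypL a d) : ⟪a, v⟫ = 0 := by
  have h : ⟪a, z + t • v⟫ = ⟪a, z⟫ := hzv.trans hz.symm
  rw [inner_add_right, inner_smul_right, add_eq_left] at h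
  exact (mul_eq_zero.1 h).resolve_left ht

theorem tendsto_inner_of_mem_Tf (hQ : Q.PosSemidef) {α : Type*} {f : Filter α} {r : ℝ}
    {z v w : α → EuclideanSpace ℝ (Fin n)} {t : α → ℝ} (ht : ∀ k, 0 < t k) (htr : ∀ k, t k ≤ r)
    (hz : ∀ k, z k ∈ solSet l u a d Q c) (hw : ∀ k, w k ∈ Tf l u a d Q c (z k + t k • v k))
    (hv : ∀ k, ‖v k‖ = 1) (hwt : Tendsto (fun k => ‖w k‖ / t k) f (𝓝 0)) :
    Tendsto (fun k => ⟪toEuclideanLin Q (z k) + c, v k⟫) f (𝓝 0) ∧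
      Tendsto (fun k => ⟪v k, toEuclideanLin Q (v k)⟫) f (𝓝 0) := by
  have hgv : ∀ k, 0 ≤ ⟪toEuclideanLin Q (z k) + c, v k⟫ := fun k => by
    obtain ⟨p, hp, -⟩ := hw k
    exact inner_nonneg_of_mem_solSet (ht k) (hz k) hp.1
  have hqv : ∀ k, 0 ≤ ⟪v k, toEuclideanLin Q (v k)⟫ := fun k =>
    (isPositive_toEuclideanLin_iff.2 hQ).inner_nonneg_right (v k)
  have hmono := fun k => inner_add_mul_inner_le_norm_of_mem_Tf (ht k) (hz k) (hw k) (hv k)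
  constructor
  · refine squeeze_zero hgv (fun k => ?_) (by simpa using hwt.const_mul r)
    have : ‖w k‖ ≤ r * (‖w k‖ / t k) := by
      rw [mul_div_assoc', le_div_iff₀ (ht k)]
      nlinarith [htr k, norm_nonneg (w k)]
    nlinarith [hmono k, hqv k, ht k]
  · refine squeeze_zero hqv (fun k => ?_) hwt
    rw [le_div_iff₀ (ht k)]
    nlinarith [hmono k, hgv k]

theorem exists_mem_solSet_dist_lt (hQ : Q.PosSemidef) {r : ℝ} {z v w : ℕ → EuclideanSpace ℝ (Fin n)}
    {t : ℕ → ℝ} (ht : ∀ k, 0 < t k) (htr : ∀ k, t k ≤ r) (hz : ∀ k, z k ∈ solSet l u a d Q c)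
    (hw : ∀ k, w k ∈ Tf l u a d Q c (z k + t k • v k)) (hv : ∀ k, ‖v k‖ = 1)
    (hwt : Tendsto (fun k => ‖w k‖ / t k) atTop (𝓝 0)) :
    ∃ k, ∃ y ∈ solSet l u a d Q c, dist (z k + t k • v k) y < t k := by
  obtain ⟨e, he, φ, hφ, hvφ⟩ :=
    (isCompact_sphere (0 : EuclideanSpace ℝ (Fin n)) 1).tendsto_subseq (x := v)
      fun k => mem_sphere_zero_iff_norm.2 (hv k)
  have hS : ∀ k, z k + t k • v k ∈ boxK l u ∩ hypL a d := fun k => by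
    obtain ⟨p, hp, -⟩ := hw k
    exact hp.1
  set g := toEuclideanLin Q (z 0) + c
  have hg : ∀ k, toEuclideanLin Q (z k) + c = g := fun k => by
    rw [toEuclideanLin_eq_of_mem_solSet hQ (hz k) (hz 0)]
  obtain ⟨hgv, hqv⟩ := tendsto_inner_of_mem_Tf hQ ht htr hz hw hv hwt
  simp only [hg] at hgv
  have hge : ⟪g, e⟫ = 0 :=
    tendsto_nhds_unique (tendsto_const_nhds.inner hvφ) (hgv.comp hφ.tendsto_atTop)
  have hQe : toEuclideanLin Q e = 0 := hQ.toEuclideanLin_eq_zero_of_inner_eq_zero <|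
    tendsto_nhds_unique
      (hvφ.inner (((toEuclideanLin Q).continuous_of_finiteDimensional.tendsto e).comp hvφ))
      (hqv.comp hφ.tendsto_atTop)
  have hav : ∀ k, ⟪a, v k⟫ = 0 := fun k =>
    inner_eq_zero_of_add_smul_mem_hypL (ht k).ne' (mem_solSet_iff.1 (hz k)).1.2 (hS k).2
  have hae : ⟪a, e⟫ = 0 := tendsto_nhds_unique (tendsto_const_nhds.inner hvφ) (by simp [hav])
  have hnear : ∀ᶠ k in atTop, ‖v (φ k) - (2 : ℝ)⁻¹ • e‖ < 1 := by
    refine (hvφ.sub_const _).norm.eventually (gt_mem_nhds ?_)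
    rw [show e - (2 : ℝ)⁻¹ • e = (2 : ℝ)⁻¹ • e by module, norm_smul, mem_sphere_zero_iff_norm.1 he]
    norm_num
  obtain ⟨k, hk, hkn⟩ := ((eventually_add_smul_half_mem_solSet (fun k => ht (φ k))
    (fun k => hz (φ k)) (fun k => hS (φ k)) hvφ hQe (fun k => (hg (φ k)).symm ▸ hge) hae).and
    hnear).exists
  refine ⟨φ k, _, hk, ?_⟩
  rw [dist_eq_norm, add_sub_add_left_eq_sub, ← smul_sub, norm_smul, Real.norm_of_nonneg (ht _).le]
  exact mul_lt_of_lt_one_right (ht _) hkn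

end QuadraticProgram

theorem Tf_semilocal_error_bound_general
    (l u a : EuclideanSpace ℝ (Fin n)) (d : ℝ)
    (Q : Matrix (Fin n) (Fin n) ℝ) (hQ : Q.PosSemidef)
    (c : EuclideanSpace ℝ (Fin n))
    (hZ : (solSet l u a d Q c).Nonempty) :
    ∀ r > (0 : ℝ), ∃ κ > (0 : ℝ),
      ∀ x : EuclideanSpace ℝ (Fin n), Metric.infDist x (solSet l u a d Q c) ≤ r →
        ∀ w ∈ Tf l u a d Q c x,
          Metric.infDist x (solSet l u a d Q c) ≤ κ * ‖w‖ := by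
  intro r _
  by_contra! h
  choose x hxr w hw hlt using fun k : ℕ => h (k + 1) k.cast_add_one_pos
  choose z hz hxz using fun k => isClosed_solSet.exists_infDist_eq_dist hZ (x k)
  set t := fun k => infDist (x k) (solSet l u a d Q c)
  have ht : ∀ k, 0 < t k := fun k =>
    (mul_nonneg k.cast_add_one_pos.le (norm_nonneg (w k))).trans_lt (hlt k)
  have hx : ∀ k, x k = z k + t k • (t k)⁻¹ • (x k - z k) := fun k => by
    rw [smul_smul, mul_inv_cancel₀ (ht k).ne', one_smul, add_sub_cancel]
  have hv : ∀ k, ‖(t k)⁻¹ • (x k - z k)‖ = 1 := fun k => by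
    rw [norm_smul, ← dist_eq_norm, ← hxz k, norm_inv, Real.norm_of_nonneg (ht k).le,
      inv_mul_cancel₀ (ht k).ne']
  have hwt : Tendsto (fun k => ‖w k‖ / t k) atTop (𝓝 0) := by
    refine squeeze_zero (fun k => div_nonneg (norm_nonneg _) (ht k).le) (fun k => ?_)
      tendsto_one_div_add_atTop_nhds_zero_nat
    rw [div_le_div_iff₀ (ht k) k.cast_add_one_pos]
    linarith [hlt k]
  obtain ⟨k, y, hy, hyk⟩ := exists_mem_solSet_dist_lt hQ ht hxr hz (fun k => hx k ▸ hw k) hv hwt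
  rw [← hx] at hyk
  exact (infDist_le_dist_of_mem hy).not_gt hyk

/-- Semilocal error bound: for every radius `r > 0` there is `κ > 0` such that
`dist(x, Z) ≤ κ ‖w‖` for every `x` with `dist(x, Z) ≤ r` and every `w ∈ T_f(x)`. -/
theorem Tf_semilocal_error_bound (hn : 1 ≤ n)
    (l u a : EuclideanSpace ℝ (Fin n)) (hlu : ∀ i, l i < u i) (d : ℝ)
    (Q : Matrix (Fin n) (Fin n) ℝ) (hQ : Q.PosSemidef)
    (c : EuclideanSpace ℝ (Fin n))
    (hne : (boxK l u ∩ hypL a d).Nonempty)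
    (hZ : (solSet l u a d Q c).Nonempty) :
    ∀ r > (0 : ℝ), ∃ κ > (0 : ℝ),
      ∀ x : EuclideanSpace ℝ (Fin n), Metric.infDist x (solSet l u a d Q c) ≤ r →
        ∀ w ∈ Tf l u a d Q c x,
          Metric.infDist x (solSet l u a d Q c) ≤ κ * ‖w‖ :=
  Tf_semilocal_error_bound_general l u a d Q hQ c hZ
end

section
/- Let A_I be an r×n real matrix with A_I A_Iᵀ = I_r, set Σ := I_n − A_Iᵀ A_I, let a ∈ ℝⁿ with aᵀΣa ≠ 0, and let B be the (r+1)×n matrix obtained by appending the row aᵀ below A_I. Then the (r+1)×(r+1) matrix B Bᵀ is invertible and I_n − Bᵀ (B Bᵀ)⁻¹ B = Σ (I_n − (aᵀΣa)⁻¹ a aᵀ) Σ, where a aᵀ denotes the n×n outer product matrix. -/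
/-!
Put `Σ = 1 - AᵀA` and `u = Σ a`. Subtracting the combination `(A a)ᵀ A` of the rows of `A`
from the last row of `B` turns `B` into `[A; uᵀ]`, and `Bᵀ (B Bᵀ)⁻¹ B` is invariant under
invertible row operations. Since `A u = 0`, `[A; uᵀ] [A; uᵀ]ᵀ` is block diagonal, so
`Bᵀ (B Bᵀ)⁻¹ B = AᵀA + (uᵀu)⁻¹ u uᵀ`. Finally `Σ` is a symmetric idempotent, whence
`uᵀu = aᵀΣa` and `u uᵀ = Σ a aᵀ Σ`.
-/

open Matrix

/-- The matrix `B` obtained by appending the row `aᵀ` below the `r × n` matrix `A`. -/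
def appendRow {r n : ℕ} (A : Matrix (Fin r) (Fin n) ℝ) (a : Fin n → ℝ) :
    Matrix (Fin (r + 1)) (Fin n) ℝ :=
  Matrix.of fun i j => Fin.lastCases (a j) (fun k => A k j) i

namespace Matrix

variable {m n R : Type*} [Fintype n] [CommRing R]

theorem submatrix_mul_transpose_self {m' : Type*} (B : Matrix m n R) (e : m' ≃ m) :
    B.submatrix e id * (B.submatrix e id)ᵀ = (B * Bᵀ).submatrix e e := by
  rw [transpose_submatrix, ← submatrix_mul_equiv B Bᵀ e (Equiv.refl n) e]
  rfl

theorem mul_mul_transpose_mul [Fintype m] (L : Matrix m m R) (B : Matrix m n R) :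
    L * B * (L * B)ᵀ = L * (B * Bᵀ) * Lᵀ := by
  simp only [transpose_mul, Matrix.mul_assoc]

theorem replicateRow_mul_transpose {ι : Type*} (u : n → R) :
    replicateRow ι u * (replicateRow ι u)ᵀ = of fun _ _ => u ⬝ᵥ u := by
  rw [transpose_replicateRow, replicateRow_mul_replicateCol]

theorem fromRows_mul_transpose_of_mul_transpose_eq_zero {k : Type*} {A : Matrix m n R}
    {C : Matrix k n R} (hAC : A * Cᵀ = 0) :
    fromRows A C * (fromRows A C)ᵀ = fromBlocks (A * Aᵀ) 0 0 (C * Cᵀ) := by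
  have hCA : C * Aᵀ = 0 := by
    rw [← transpose_transpose (C * Aᵀ), transpose_mul, transpose_transpose, hAC, transpose_zero]
  rw [transpose_fromRows, fromRows_mul_fromCols, hAC, hCA]

theorem mulVec_dotProduct_mulVec_of_isSymm_of_isIdempotentElem {S : Matrix n n R}
    (hS : S.IsSymm) (hSS : IsIdempotentElem S) (a : n → R) :
    (S *ᵥ a) ⬝ᵥ (S *ᵥ a) = a ⬝ᵥ (S *ᵥ a) := by
  rw [dotProduct_mulVec, ← mulVec_transpose, hS.eq, mulVec_mulVec, hSS.eq, dotProduct_comm]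

theorem vecMulVec_mulVec_of_isSymm {S : Matrix n n R} (hS : S.IsSymm) (a : n → R) :
    vecMulVec (S *ᵥ a) (S *ᵥ a) = S * vecMulVec a a * S := by
  rw [mul_vecMulVec, vecMulVec_mul, ← mulVec_transpose, hS.eq]

theorem mul_one_sub_smul_mul_of_isIdempotentElem [DecidableEq n] {S : Matrix n n R}
    (hS : IsIdempotentElem S) (c : R) (V : Matrix n n R) :
    S * (1 - c • V) * S = S - c • (S * V * S) := by
  rw [Matrix.mul_sub, Matrix.sub_mul, Matrix.mul_one, hS.eq, Matrix.mul_smul, Matrix.smul_mul]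

variable [Fintype m] [DecidableEq m]

theorem isIdempotentElem_transpose_mul_self [DecidableEq n] {A : Matrix m n R}
    (hA : A * Aᵀ = 1) : IsIdempotentElem (Aᵀ * A) := by
  rw [IsIdempotentElem, Matrix.mul_assoc, ← Matrix.mul_assoc A, hA, Matrix.one_mul]

theorem mul_one_sub_transpose_mul_self [DecidableEq n] {A : Matrix m n R} (hA : A * Aᵀ = 1) :
    A * (1 - Aᵀ * A) = 0 := by
  rw [Matrix.mul_sub, Matrix.mul_one, ← Matrix.mul_assoc, hA, Matrix.one_mul, sub_self]

theorem fromRows_replicateRow_eq_mul [DecidableEq n] {ι : Type*} [Fintype ι] [DecidableEq ι]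
    (A : Matrix m n R) (a : n → R) :
    fromRows A (replicateRow ι a) =
      (fromBlocks 1 0 (replicateRow ι (A *ᵥ a)) 1 : Matrix (m ⊕ ι) (m ⊕ ι) R) *
        fromRows A (replicateRow ι ((1 - Aᵀ * A) *ᵥ a)) := by
  have hrow : (A *ᵥ a) ᵥ* A = (Aᵀ * A) *ᵥ a := by
    rw [← mulVec_transpose, mulVec_mulVec]
  rw [fromBlocks_mul_fromRows, Matrix.one_mul, Matrix.zero_mul, add_zero, Matrix.one_mul,
    ← replicateRow_vecMul, hrow, ← replicateRow_add, sub_mulVec, one_mulVec, add_sub_cancel]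

/-- Over `ℝ`, when `B Bᵀ` is invertible, this is the orthogonal projection onto the row space
of `B`; the HS-Jacobian is `1 - B.rowSpaceProj`. -/
noncomputable def rowSpaceProj (B : Matrix m n R) : Matrix n n R := Bᵀ * (B * Bᵀ)⁻¹ * B

theorem rowSpaceProj_submatrix {m' : Type*} [Fintype m'] [DecidableEq m'] (B : Matrix m n R)
    (e : m' ≃ m) : rowSpaceProj (B.submatrix e id) = rowSpaceProj B := by
  unfold rowSpaceProj
  rw [submatrix_mul_transpose_self, inv_submatrix_equiv, transpose_submatrix,
    submatrix_mul_equiv, submatrix_mul_equiv, submatrix_id_id]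

theorem isUnit_mul_mul_transpose_iff {L : Matrix m m R} (hL : IsUnit L) (B : Matrix m n R) :
    IsUnit (L * B * (L * B)ᵀ) ↔ IsUnit (B * Bᵀ) := by
  rw [mul_mul_transpose_mul, IsUnit.mul_right_iff ((isUnit_transpose L).mpr hL),
    IsUnit.mul_left_iff hL]

theorem rowSpaceProj_mul_left {L : Matrix m m R} (hL : IsUnit L) (B : Matrix m n R) :
    rowSpaceProj (L * B) = rowSpaceProj B := by
  have hLT : IsUnit Lᵀ := (isUnit_transpose L).mpr hL
  rw [rowSpaceProj, rowSpaceProj, mul_mul_transpose_mul, mul_inv_rev, mul_inv_rev, transpose_mul]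
  simp only [Matrix.mul_assoc]
  rw [← Matrix.mul_assoc L⁻¹ L, nonsing_inv_mul _ ((isUnit_iff_isUnit_det _).mp hL),
    Matrix.one_mul, ← Matrix.mul_assoc Lᵀ, mul_nonsing_inv _ ((isUnit_iff_isUnit_det _).mp hLT),
    Matrix.one_mul]

theorem rowSpaceProj_of_mul_transpose_eq_one {A : Matrix m n R} (hA : A * Aᵀ = 1) :
    rowSpaceProj A = Aᵀ * A := by
  rw [rowSpaceProj, hA, inv_one, Matrix.mul_one]

theorem rowSpaceProj_replicateRow {K ι : Type*} [Field K] [Unique ι] [Fintype ι] [DecidableEq ι]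
    (u : n → K) : rowSpaceProj (replicateRow ι u) = (u ⬝ᵥ u)⁻¹ • vecMulVec u u := by
  rw [rowSpaceProj, replicateRow_mul_transpose, inv_subsingleton, transpose_replicateRow]
  ext i j
  simp only [of_apply, Ring.inverse_eq_inv', mul_apply, Finset.univ_unique, replicateCol_apply,
    Finset.sum_singleton, replicateRow_apply, diagonal_apply_eq, smul_apply, vecMulVec_apply,
    smul_eq_mul]
  ring

theorem isUnit_replicateRow_mul_transpose_iff {K ι : Type*} [Field K] [Unique ι] [Fintype ι]
    [DecidableEq ι] (u : n → K) :
    IsUnit (replicateRow ι u * (replicateRow ι u)ᵀ) ↔ u ⬝ᵥ u ≠ 0 := by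
  rw [isUnit_iff_isUnit_det, replicateRow_mul_transpose, det_unique, of_apply, isUnit_iff_ne_zero]

variable {k : Type*} [Fintype k] [DecidableEq k]

theorem isUnit_fromRows_mul_transpose {A : Matrix m n R} {C : Matrix k n R}
    (hAC : A * Cᵀ = 0) (hA : IsUnit (A * Aᵀ)) (hC : IsUnit (C * Cᵀ)) :
    IsUnit (fromRows A C * (fromRows A C)ᵀ) := by
  rw [fromRows_mul_transpose_of_mul_transpose_eq_zero hAC, isUnit_fromBlocks_zero₂₁]
  exact ⟨hA, hC⟩

theorem rowSpaceProj_fromRows {A : Matrix m n R} {C : Matrix k n R}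
    (hAC : A * Cᵀ = 0) (hA : IsUnit (A * Aᵀ)) (hC : IsUnit (C * Cᵀ)) :
    rowSpaceProj (fromRows A C) = rowSpaceProj A + rowSpaceProj C := by
  rw [rowSpaceProj, fromRows_mul_transpose_of_mul_transpose_eq_zero hAC,
    inv_fromBlocks_zero₂₁_of_isUnit_iff _ _ _ (iff_of_true hA hC), transpose_fromRows,
    fromCols_mul_fromBlocks, fromCols_mul_fromRows]
  simp only [Matrix.zero_mul, neg_zero, Matrix.mul_zero, add_zero, zero_add, rowSpaceProj]

end Matrix

theorem appendRow_eq_submatrix_fromRows {r n : ℕ} (A : Matrix (Fin r) (Fin n) ℝ)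
    (a : Fin n → ℝ) :
    appendRow A a = (fromRows A (replicateRow (Fin 1) a)).submatrix finSumFinEquiv.symm id := by
  ext i j
  refine Fin.lastCases ?_ (fun k => ?_) i <;> simp [appendRow]

/-- If `A Aᵀ = I_r`, `Σ = I_n − Aᵀ A` and `aᵀ Σ a ≠ 0`, then `B Bᵀ` is invertible and
`I_n − Bᵀ (B Bᵀ)⁻¹ B = Σ (I_n − (aᵀΣa)⁻¹ a aᵀ) Σ`, where `B = [A; aᵀ]`. -/
theorem hsJacobian_formula_nondegenerate {r n : ℕ}
    (A : Matrix (Fin r) (Fin n) ℝ) (hA : A * A.transpose = 1) (a : Fin n → ℝ)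
    (hne : a ⬝ᵥ ((1 - A.transpose * A).mulVec a) ≠ 0) :
    IsUnit (appendRow A a * (appendRow A a).transpose) ∧
    (1 : Matrix (Fin n) (Fin n) ℝ) -
        (appendRow A a).transpose * (appendRow A a * (appendRow A a).transpose)⁻¹ *
          appendRow A a =
      (1 - A.transpose * A) *
        (1 - (a ⬝ᵥ ((1 - A.transpose * A).mulVec a))⁻¹ • Matrix.vecMulVec a a) *
        (1 - A.transpose * A) := by
  set S := 1 - Aᵀ * A
  have hSsymm : S.IsSymm :=
    isSymm_one.sub (by rw [IsSymm, transpose_mul, transpose_transpose])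
  have hSidem : IsIdempotentElem S := (isIdempotentElem_transpose_mul_self hA).one_sub
  set U := replicateRow (Fin 1) (S *ᵥ a)
  set L : Matrix (Fin r ⊕ Fin 1) (Fin r ⊕ Fin 1) ℝ :=
    fromBlocks 1 0 (replicateRow _ (A *ᵥ a)) 1
  have hL : IsUnit L := isUnit_fromBlocks_zero₁₂.mpr ⟨isUnit_one, isUnit_one⟩
  have hB : appendRow A a = (L * fromRows A U).submatrix finSumFinEquiv.symm id := by
    rw [appendRow_eq_submatrix_fromRows, fromRows_replicateRow_eq_mul]
  have hAU : A * Uᵀ = 0 := by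
    rw [transpose_replicateRow, ← replicateCol_mulVec, mulVec_mulVec,
      mul_one_sub_transpose_mul_self hA, zero_mulVec, replicateCol_zero]
  have hAA : IsUnit (A * Aᵀ) := hA ▸ isUnit_one
  have hUU : IsUnit (U * Uᵀ) := (isUnit_replicateRow_mul_transpose_iff _).mpr <| by
    rwa [mulVec_dotProduct_mulVec_of_isSymm_of_isIdempotentElem hSsymm hSidem]
  refine ⟨?_, ?_⟩
  · rw [hB, submatrix_mul_transpose_self, isUnit_submatrix_equiv, isUnit_mul_mul_transpose_iff hL]
    exact isUnit_fromRows_mul_transpose hAU hAA hUU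
  · change 1 - rowSpaceProj (appendRow A a) = _
    rw [hB, rowSpaceProj_submatrix, rowSpaceProj_mul_left hL, rowSpaceProj_fromRows hAU hAA hUU,
      rowSpaceProj_of_mul_transpose_eq_one hA, rowSpaceProj_replicateRow,
      mulVec_dotProduct_mulVec_of_isSymm_of_isIdempotentElem hSsymm hSidem,
      vecMulVec_mulVec_of_isSymm hSsymm, mul_one_sub_smul_mul_of_isIdempotentElem hSidem,
      ← sub_sub]
end

section
/- The range of the function g : ℝ → ℝ, g(λ) := d − ∑ᵢ aᵢ · clamp(vᵢ − λaᵢ; lᵢ, uᵢ), is exactly the closed bounded interval [d + ∑_{i: aᵢ<0} lᵢ|aᵢ| − ∑_{i: aᵢ>0} uᵢ|aᵢ| , d + ∑_{i: aᵢ<0} uᵢ|aᵢ| − ∑_{i: aᵢ>0} lᵢ|aᵢ|]. -/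
/-!
Every clamp lies in `[lᵢ, uᵢ]`, so `g λ` is squeezed between the two endpoints; and once `|λ|`
is large every clamp saturates, at `lᵢ` or `uᵢ` according to the signs of `aᵢ` and `λ`, so that
`g` equals the lower endpoint near `-∞` and the upper one near `+∞`. Since `g` is continuous,
the intermediate value theorem fills in the interval.
-/

/-- `clamp(t; l, u) = max(l, min(u, t))`. -/
def clamp (l u t : ℝ) : ℝ := max l (min u t)

/-- `g(λ) = d − ∑ᵢ aᵢ · clamp(vᵢ − λ aᵢ; lᵢ, uᵢ)`, the derivative of the dual function of
the projection problem onto `K ∩ L`. -/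
def gFun {n : ℕ} (l u a v : Fin n → ℝ) (d : ℝ) (lam : ℝ) : ℝ :=
  d - ∑ i, a i * clamp (l i) (u i) (v i - lam * a i)

open Filter Finset

theorem Continuous.range_eq_Icc_of_forall_mem {X α : Type*} [TopologicalSpace X]
    [PreconnectedSpace X] [LinearOrder α] [TopologicalSpace α] [OrderClosedTopology α]
    {f : X → α} (hf : Continuous f) {m M : α} (hm : m ∈ Set.range f) (hM : M ∈ Set.range f)
    (hbound : ∀ x, f x ∈ Set.Icc m M) : Set.range f = Set.Icc m M := by
  obtain ⟨x, rfl⟩ := hm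
  obtain ⟨y, rfl⟩ := hM
  exact (Set.range_subset_iff.2 hbound).antisymm (intermediate_value_univ x y hf)

section Clamp

variable {l u : ℝ}

lemma le_clamp (t : ℝ) : l ≤ clamp l u t := le_max_left _ _

lemma clamp_le (h : l ≤ u) (t : ℝ) : clamp l u t ≤ u := max_le h (min_le_left _ _)

lemma clamp_of_le {t : ℝ} (h : l ≤ u) (ht : t ≤ l) : clamp l u t = l := by
  rw [clamp, min_eq_right (ht.trans h), max_eq_left ht]

lemma clamp_of_ge {t : ℝ} (h : l ≤ u) (ht : u ≤ t) : clamp l u t = u := by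
  rw [clamp, min_eq_left ht, max_eq_right h]

lemma Filter.Tendsto.eventually_clamp_sub_eq_left {α : Type*} {F : Filter α} {f : α → ℝ}
    (hf : Tendsto f F atTop) (h : l ≤ u) (v : ℝ) : ∀ᶠ x in F, clamp l u (v - f x) = l :=
  (hf.eventually_ge_atTop (v - l)).mono fun _ hx => clamp_of_le h (by linarith)

lemma Filter.Tendsto.eventually_clamp_sub_eq_right {α : Type*} {F : Filter α} {f : α → ℝ}
    (hf : Tendsto f F atBot) (h : l ≤ u) (v : ℝ) : ∀ᶠ x in F, clamp l u (v - f x) = u :=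
  (hf.eventually_le_atBot (v - u)).mono fun _ hx => clamp_of_ge h (by linarith)

end Clamp

lemma Finset.sum_mul_eq_sum_filter_pos_sub_sum_filter_neg {ι : Type*} (s : Finset ι)
    (a w : ι → ℝ) :
    ∑ i ∈ s, a i * w i =
      (∑ i ∈ s with 0 < a i, w i * |a i|) - ∑ i ∈ s with a i < 0, w i * |a i| := by
  rw [sum_filter, sum_filter, ← sum_sub_distrib]
  refine sum_congr rfl fun i _ => ?_
  rcases lt_trichotomy (a i) 0 with h | h | h
  · simp [h, h.not_gt, abs_of_neg h, mul_comm]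
  · simp [h]
  · simp [h, h.not_gt, abs_of_pos h, mul_comm]

section SignSplit

variable {n : ℕ} (a : Fin n → ℝ) (d : ℝ)

/-- `d - ⟪a, x⟫` for the vector `x` that equals `p` where `a < 0` and `q` where `a > 0`. -/
noncomputable def signSplitValue (p q : Fin n → ℝ) : ℝ :=
  d + (∑ i ∈ univ.filter fun i => a i < 0, p i * |a i|) -
    ∑ i ∈ univ.filter fun i => 0 < a i, q i * |a i|

variable {a}

lemma signSplitValue_le_signSplitValue {p q p' q' : Fin n → ℝ} (hp : p ≤ p') (hq : q' ≤ q) :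
    signSplitValue a d p q ≤ signSplitValue a d p' q' := by
  unfold signSplitValue
  gcongr with i _ i _
  · exact hp i
  · exact hq i

lemma signSplitValue_congr {p q p' q' : Fin n → ℝ} (hp : ∀ i, a i < 0 → p i = p' i)
    (hq : ∀ i, 0 < a i → q i = q' i) : signSplitValue a d p q = signSplitValue a d p' q' := by
  unfold signSplitValue
  refine congrArg₂ (· - ·) (congrArg (d + ·) ?_) ?_
  · exact sum_congr rfl fun i hi => by rw [hp i (mem_filter.1 hi).2]
  · exact sum_congr rfl fun i hi => by rw [hq i (mem_filter.1 hi).2]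

end SignSplit

section GFun

variable {n : ℕ} {l u : Fin n → ℝ} (a v : Fin n → ℝ) (d : ℝ)

lemma continuous_gFun : Continuous (gFun l u a v d) := by
  unfold gFun clamp
  fun_prop

lemma gFun_eq_signSplitValue (lam : ℝ) :
    gFun l u a v d lam = signSplitValue a d (fun i => clamp (l i) (u i) (v i - lam * a i))
      (fun i => clamp (l i) (u i) (v i - lam * a i)) := by
  rw [gFun, sum_mul_eq_sum_filter_pos_sub_sum_filter_neg, signSplitValue]
  ring

lemma gFun_mem_Icc (hlu : ∀ i, l i ≤ u i) (lam : ℝ) :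
    gFun l u a v d lam ∈ Set.Icc (signSplitValue a d l u) (signSplitValue a d u l) := by
  rw [gFun_eq_signSplitValue]
  exact ⟨signSplitValue_le_signSplitValue d (fun i => le_clamp _) (fun i => clamp_le (hlu i) _),
    signSplitValue_le_signSplitValue d (fun i => clamp_le (hlu i) _) (fun i => le_clamp _)⟩

lemma gFun_eventually_eq_atTop (hlu : ∀ i, l i ≤ u i) :
    ∀ᶠ lam in atTop, gFun l u a v d lam = signSplitValue a d u l := by
  have hsat : ∀ i, ∀ᶠ lam in atTop, (a i < 0 → clamp (l i) (u i) (v i - lam * a i) = u i) ∧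
      (0 < a i → clamp (l i) (u i) (v i - lam * a i) = l i) := fun i => by
    rcases lt_trichotomy (a i) 0 with h | h | h
    · filter_upwards [(tendsto_id.atTop_mul_const_of_neg h).eventually_clamp_sub_eq_right
        (hlu i) (v i)] with lam hlam using ⟨fun _ => hlam, fun h' => absurd h' h.not_gt⟩
    · exact Eventually.of_forall fun _ => by simp [h]
    · filter_upwards [(tendsto_id.atTop_mul_const h).eventually_clamp_sub_eq_left
        (hlu i) (v i)] with lam hlam using ⟨fun h' => absurd h' h.not_gt, fun _ => hlam⟩
  filter_upwards [eventually_all.2 hsat] with lam hlam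
  rw [gFun_eq_signSplitValue]
  exact signSplitValue_congr d (fun i => (hlam i).1) (fun i => (hlam i).2)

lemma gFun_eventually_eq_atBot (hlu : ∀ i, l i ≤ u i) :
    ∀ᶠ lam in atBot, gFun l u a v d lam = signSplitValue a d l u := by
  have hsat : ∀ i, ∀ᶠ lam in atBot, (a i < 0 → clamp (l i) (u i) (v i - lam * a i) = l i) ∧
      (0 < a i → clamp (l i) (u i) (v i - lam * a i) = u i) := fun i => by
    rcases lt_trichotomy (a i) 0 with h | h | h
    · filter_upwards [(tendsto_id.atBot_mul_const_of_neg h).eventually_clamp_sub_eq_left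
        (hlu i) (v i)] with lam hlam using ⟨fun _ => hlam, fun h' => absurd h' h.not_gt⟩
    · exact Eventually.of_forall fun _ => by simp [h]
    · filter_upwards [(tendsto_id.atBot_mul_const h).eventually_clamp_sub_eq_right
        (hlu i) (v i)] with lam hlam using ⟨fun h' => absurd h' h.not_gt, fun _ => hlam⟩
  filter_upwards [eventually_all.2 hsat] with lam hlam
  rw [gFun_eq_signSplitValue]
  exact signSplitValue_congr d (fun i => (hlam i).1) (fun i => (hlam i).2)

end GFun

theorem gFun_range_general {n : ℕ}
    (l u a v : Fin n → ℝ) (hlu : ∀ i, l i < u i) (d : ℝ) :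
    Set.range (gFun l u a v d) =
      Set.Icc
        (d + (∑ i ∈ Finset.univ.filter fun i => a i < 0, l i * |a i|) -
          ∑ i ∈ Finset.univ.filter fun i => 0 < a i, u i * |a i|)
        (d + (∑ i ∈ Finset.univ.filter fun i => a i < 0, u i * |a i|) -
          ∑ i ∈ Finset.univ.filter fun i => 0 < a i, l i * |a i|) := by
  have hle : ∀ i, l i ≤ u i := fun i => (hlu i).le
  exact (continuous_gFun a v d).range_eq_Icc_of_forall_mem
    (gFun_eventually_eq_atBot a v d hle).exists (gFun_eventually_eq_atTop a v d hle).exists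
    (gFun_mem_Icc a v d hle)

/-- The range of `g` is exactly the closed bounded interval
`[d + ∑_{aᵢ<0} lᵢ|aᵢ| − ∑_{aᵢ>0} uᵢ|aᵢ|, d + ∑_{aᵢ<0} uᵢ|aᵢ| − ∑_{aᵢ>0} lᵢ|aᵢ|]`. -/
theorem gFun_range {n : ℕ} (hn : 1 ≤ n)
    (l u a v : Fin n → ℝ) (hlu : ∀ i, l i < u i) (d : ℝ) :
    Set.range (gFun l u a v d) =
      Set.Icc
        (d + (∑ i ∈ Finset.univ.filter fun i => a i < 0, l i * |a i|) -
          ∑ i ∈ Finset.univ.filter fun i => 0 < a i, u i * |a i|)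
        (d + (∑ i ∈ Finset.univ.filter fun i => a i < 0, u i * |a i|) -
          ∑ i ∈ Finset.univ.filter fun i => 0 < a i, l i * |a i|) :=
  gFun_range_general l u a v hlu d
end

section
/- Assume K∩L ≠ ∅, i.e. there exists x₀ ∈ ℝⁿ with lᵢ ≤ (x₀)ᵢ ≤ uᵢ for all i and ⟪a,x₀⟫ = d. Then for every v ∈ ℝⁿ there exists λ̂ ∈ ℝ with g(λ̂) = 0, i.e. ∑ᵢ aᵢ · clamp(vᵢ − λ̂aᵢ; lᵢ, uᵢ) = d. -/
lemma clamp_continuous (l u : ℝ) : Continuous (clamp l u) :=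
  continuous_const.max (continuous_const.min continuous_id)

lemma key_le {n : ℕ} (l u a v : Fin n → ℝ) (hlu : ∀ i, l i < u i)
    (x : Fin n → ℝ) (hx : ∀ i, l i ≤ x i ∧ x i ≤ u i) :
    ∃ Λ : ℝ, 0 ≤ Λ ∧ ∀ i, a i * clamp (l i) (u i) (v i - Λ * a i) ≤ a i * x i := by
  set Λ : ℝ := ∑ i, (|v i - l i| + |v i - u i|) / |a i| with hΛ
  have hterm : ∀ i, 0 ≤ (|v i - l i| + |v i - u i|) / |a i| := fun i =>
    div_nonneg (by positivity) (abs_nonneg _)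
  have hΛ0 : 0 ≤ Λ := Finset.sum_nonneg fun i _ => hterm i
  have hΛge : ∀ i, (|v i - l i| + |v i - u i|) / |a i| ≤ Λ := fun i =>
    Finset.single_le_sum (fun j _ => hterm j) (Finset.mem_univ i)
  refine ⟨Λ, hΛ0, fun i => ?_⟩
  rcases lt_trichotomy (a i) 0 with hai | hai | hai
  · -- a i < 0 : clamp = u i
    have habs : |a i| = -a i := abs_of_neg hai
    have h1 : (u i - v i) / (-a i) ≤ Λ := by
      refine le_trans ?_ (hΛge i)
      rw [habs]
      gcongr
      · linarith
      calc u i - v i ≤ |v i - u i| := by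
            rw [abs_sub_comm]; exact le_abs_self _
        _ ≤ |v i - l i| + |v i - u i| := le_add_of_nonneg_left (abs_nonneg _)
    have h2 : u i ≤ v i - Λ * a i := by
      have := (div_le_iff₀ (by linarith : (0:ℝ) < -a i)).mp h1
      linarith
    have hc : clamp (l i) (u i) (v i - Λ * a i) = u i := by
      unfold clamp
      rw [min_eq_left h2, max_eq_right (hlu i).le]
    rw [hc]
    exact mul_le_mul_of_nonpos_left (hx i).2 hai.le
  · simp [hai]
  · -- a i > 0 : clamp = l i
    have habs : |a i| = a i := abs_of_pos hai
    have h1 : (v i - l i) / a i ≤ Λ := by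
      refine le_trans ?_ (hΛge i)
      rw [habs]
      gcongr
      calc v i - l i ≤ |v i - l i| := le_abs_self _
        _ ≤ |v i - l i| + |v i - u i| := le_add_of_nonneg_right (abs_nonneg _)
    have h2 : v i - Λ * a i ≤ l i := by
      have := (div_le_iff₀ hai).mp h1
      linarith
    have hc : clamp (l i) (u i) (v i - Λ * a i) = l i := by
      unfold clamp
      rw [min_eq_right (by linarith [hlu i]), max_eq_left h2]
    rw [hc]
    exact mul_le_mul_of_nonneg_left (hx i).1 hai.le

/-- If `K ∩ L ≠ ∅`, then for every `v` the piecewise linear equation `g(λ) = 0` has a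
solution, i.e. `∑ᵢ aᵢ · clamp(vᵢ − λ aᵢ; lᵢ, uᵢ) = d` for some `λ`. -/
theorem gFun_exists_zero {n : ℕ} (hn : 1 ≤ n)
    (l u a : Fin n → ℝ) (hlu : ∀ i, l i < u i) (d : ℝ)
    (hne : ∃ x₀ : Fin n → ℝ, (∀ i, l i ≤ x₀ i ∧ x₀ i ≤ u i) ∧ ∑ i, a i * x₀ i = d) :
    ∀ v : Fin n → ℝ, ∃ lamhat : ℝ, gFun l u a v d lamhat = 0 := by
  intro v
  obtain ⟨x₀, hx₀, hsum⟩ := hne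
  obtain ⟨Λ₁, hΛ₁0, hΛ₁⟩ := key_le l u a v hlu x₀ hx₀
  obtain ⟨Λ₂, hΛ₂0, hΛ₂⟩ := key_le l u (fun i => -a i) v hlu x₀ hx₀
  -- g(Λ₁) ≥ 0
  have hpos : 0 ≤ gFun l u a v d Λ₁ := by
    unfold gFun
    have : ∑ i, a i * clamp (l i) (u i) (v i - Λ₁ * a i) ≤ d := by
      rw [← hsum]
      exact Finset.sum_le_sum fun i _ => hΛ₁ i
    linarith
  -- g(-Λ₂) ≤ 0
  have hneg : gFun l u a v d (-Λ₂) ≤ 0 := by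
    unfold gFun
    have : d ≤ ∑ i, a i * clamp (l i) (u i) (v i - (-Λ₂) * a i) := by
      rw [← hsum]
      refine Finset.sum_le_sum fun i _ => ?_
      have h := hΛ₂ i
      have e : v i - Λ₂ * -a i = v i - -Λ₂ * a i := by ring
      rw [e] at h
      linarith
    linarith
  have hcont : Continuous (gFun l u a v d) := by
    unfold gFun
    refine continuous_const.sub (continuous_finset_sum _ fun i _ => ?_)
    exact continuous_const.mul
      ((clamp_continuous (l i) (u i)).comp (continuous_const.sub (continuous_id.mul continuous_const)))
  have hle : (-Λ₂ : ℝ) ≤ Λ₁ := by linarith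
  have := intermediate_value_Icc hle hcont.continuousOn
  have h0 : (0:ℝ) ∈ Set.Icc (gFun l u a v d (-Λ₂)) (gFun l u a v d Λ₁) := ⟨hneg, hpos⟩
  obtain ⟨lam, _, hlam⟩ := this h0
  exact ⟨lam, hlam⟩
end

section
/- Let v ∈ ℝⁿ and suppose λ̂ ∈ ℝ satisfies ∑ᵢ aᵢ · clamp(vᵢ − λ̂aᵢ; lᵢ, uᵢ) = d. Define p ∈ ℝⁿ by pᵢ := clamp(vᵢ − λ̂aᵢ; lᵢ, uᵢ). Then p ∈ K∩L and p is the Euclidean projection of v onto K∩L: ‖v − p‖ ≤ ‖v − q‖ for every q ∈ K∩L, with strict inequality whenever q ≠ p. -/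
open RealInnerProductSpace

variable {n : ℕ}

/-- The candidate projection `p = Π_K(v − λ̂ a)`, i.e. `pᵢ = clamp(vᵢ − λ̂aᵢ; lᵢ, uᵢ)`. -/
def projClamp (l u a v : EuclideanSpace ℝ (Fin n)) (lamhat : ℝ) :
    EuclideanSpace ℝ (Fin n) :=
  WithLp.toLp 2 (fun i => clamp (l i) (u i) (v i - lamhat * a i))

/-!
If `⟪v - p, q - p⟫ ≤ 0`, then `‖v - q‖² = ‖v - p‖² - 2⟪v - p, q - p⟫ + ‖q - p‖² ≥ ‖v - p‖² + ‖q - p‖²`,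
so it suffices to check this variational inequality for `p = Π_K(v - λ̂ a)` and every `q ∈ K ∩ L`.
Split `v - p = (v - λ̂ a - p) + λ̂ a`: the first part satisfies the variational inequality of the
box coordinatewise (the one-dimensional inequality for `clamp`), and the second is orthogonal to
`q - p` because both points lie on the hyperplane `⟪a, ·⟫ = d`.
-/

theorem clamp_mem_Icc {l u : ℝ} (t : ℝ) (hlu : l ≤ u) : clamp l u t ∈ Set.Icc l u :=
  ⟨le_max_left _ _, max_le hlu (min_le_left _ _)⟩

theorem sub_clamp_mul_sub_clamp_nonpos {l u q : ℝ} (t : ℝ) (hq : q ∈ Set.Icc l u) :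
    (t - clamp l u t) * (q - clamp l u t) ≤ 0 := by
  obtain ⟨hlq, hqu⟩ := hq
  unfold clamp
  rcases le_total u t with hut | htu
  · rw [min_eq_left hut, max_eq_right (hlq.trans hqu)]
    nlinarith
  · rw [min_eq_right htu]
    rcases le_total l t with hlt | htl
    · rw [max_eq_right hlt]; simp
    · rw [max_eq_left htl]; nlinarith

theorem EuclideanSpace.inner_eq_sum_mul (x y : EuclideanSpace ℝ (Fin n)) :
    ⟪x, y⟫ = ∑ i, x i * y i := by
  simp [PiLp.inner_apply, mul_comm]

section NearestPoint

variable {E : Type*} [NormedAddCommGroup E] [InnerProductSpace ℝ E]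

theorem sq_norm_sub_add_sq_norm_sub_le_of_inner_nonpos {v p q : E} (h : ⟪v - p, q - p⟫ ≤ 0) :
    ‖v - p‖ ^ 2 + ‖q - p‖ ^ 2 ≤ ‖v - q‖ ^ 2 := by
  have hsplit : v - q = (v - p) - (q - p) := by abel
  rw [hsplit, norm_sub_sq_real (v - p) (q - p)]
  linarith

theorem norm_sub_le_of_inner_nonpos {v p q : E} (h : ⟪v - p, q - p⟫ ≤ 0) :
    ‖v - p‖ ≤ ‖v - q‖ := by
  have := sq_norm_sub_add_sq_norm_sub_le_of_inner_nonpos h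
  exact (pow_le_pow_iff_left₀ (norm_nonneg _) (norm_nonneg _) two_ne_zero).mp
    (by nlinarith [sq_nonneg ‖q - p‖])

theorem norm_sub_lt_of_inner_nonpos {v p q : E} (h : ⟪v - p, q - p⟫ ≤ 0) (hqp : q ≠ p) :
    ‖v - p‖ < ‖v - q‖ := by
  have := sq_norm_sub_add_sq_norm_sub_le_of_inner_nonpos h
  have hpos : 0 < ‖q - p‖ := norm_pos_iff.mpr (sub_ne_zero.mpr hqp)
  exact (pow_lt_pow_iff_left₀ (norm_nonneg _) (norm_nonneg _) two_ne_zero).mp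
    (by nlinarith)

end NearestPoint

section ProjClamp

variable {l u a v : EuclideanSpace ℝ (Fin n)} {lamhat d : ℝ}

theorem projClamp_mem_boxK (hlu : ∀ i, l i ≤ u i) : projClamp l u a v lamhat ∈ boxK l u :=
  fun i => clamp_mem_Icc _ (hlu i)

theorem projClamp_mem_hypL (hlam : ∑ i, a i * clamp (l i) (u i) (v i - lamhat * a i) = d) :
    projClamp l u a v lamhat ∈ hypL a d := by
  show ⟪a, _⟫ = d
  rw [EuclideanSpace.inner_eq_sum_mul]
  exact hlam

theorem inner_sub_projClamp_nonpos_of_mem_boxK {q : EuclideanSpace ℝ (Fin n)}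
    (hq : q ∈ boxK l u) :
    ⟪(v - lamhat • a) - projClamp l u a v lamhat, q - projClamp l u a v lamhat⟫ ≤ 0 := by
  rw [EuclideanSpace.inner_eq_sum_mul]
  exact Finset.sum_nonpos fun i _ => sub_clamp_mul_sub_clamp_nonpos _ (hq i)

theorem inner_sub_projClamp_nonpos_of_mem_boxK_inter_hypL
    (hlam : ∑ i, a i * clamp (l i) (u i) (v i - lamhat * a i) = d)
    {q : EuclideanSpace ℝ (Fin n)} (hq : q ∈ boxK l u ∩ hypL a d) :
    ⟪v - projClamp l u a v lamhat, q - projClamp l u a v lamhat⟫ ≤ 0 := by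
  set p := projClamp l u a v lamhat
  have hp : ⟪a, p⟫ = d := projClamp_mem_hypL hlam
  have horth : ⟪a, q - p⟫ = 0 := by
    rw [inner_sub_right, hq.2, hp, sub_self]
  have hsplit : v - p = ((v - lamhat • a) - p) + lamhat • a := by abel
  rw [hsplit, inner_add_left, real_inner_smul_left, horth, mul_zero, add_zero]
  exact inner_sub_projClamp_nonpos_of_mem_boxK hq.1

end ProjClamp

theorem clamp_is_projection_general
    (l u a : EuclideanSpace ℝ (Fin n)) (hlu : ∀ i, l i < u i) (d : ℝ)
    (v : EuclideanSpace ℝ (Fin n)) (lamhat : ℝ)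
    (hlam : ∑ i, a i * clamp (l i) (u i) (v i - lamhat * a i) = d) :
    projClamp l u a v lamhat ∈ boxK l u ∩ hypL a d ∧
    ∀ q ∈ boxK l u ∩ hypL a d,
      ‖v - projClamp l u a v lamhat‖ ≤ ‖v - q‖ ∧
      (q ≠ projClamp l u a v lamhat → ‖v - projClamp l u a v lamhat‖ < ‖v - q‖) := by
  refine ⟨⟨projClamp_mem_boxK fun i => (hlu i).le, projClamp_mem_hypL hlam⟩, fun q hq => ?_⟩
  have hvar := inner_sub_projClamp_nonpos_of_mem_boxK_inter_hypL hlam hq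
  exact ⟨norm_sub_le_of_inner_nonpos hvar, norm_sub_lt_of_inner_nonpos hvar⟩

/-- If `λ̂` solves `∑ᵢ aᵢ clamp(vᵢ − λ̂aᵢ; lᵢ, uᵢ) = d`, then
`p = clamp(v − λ̂ a; l, u)` is the Euclidean projection of `v` onto `K ∩ L`. -/
theorem clamp_is_projection (hn : 1 ≤ n)
    (l u a : EuclideanSpace ℝ (Fin n)) (hlu : ∀ i, l i < u i) (d : ℝ)
    (v : EuclideanSpace ℝ (Fin n)) (lamhat : ℝ)
    (hlam : ∑ i, a i * clamp (l i) (u i) (v i - lamhat * a i) = d) :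
    projClamp l u a v lamhat ∈ boxK l u ∩ hypL a d ∧
    ∀ q ∈ boxK l u ∩ hypL a d,
      ‖v - projClamp l u a v lamhat‖ ≤ ‖v - q‖ ∧
      (q ≠ projClamp l u a v lamhat → ‖v - projClamp l u a v lamhat‖ < ‖v - q‖) :=
  clamp_is_projection_general l u a hlu d v lamhat hlam
end

section
/- Let Q and P be symmetric positive semidefinite n×n real matrices, σ > 0, and let g lie in the column space Ran(Q) of Q. Then there exists exactly one vector d ∈ Ran(Q) satisfying (Q + σ Q P Q) d = −g. -/
/-! Write `M = Q + σ Q P Q = Q (I + σ P Q)`, so `M` maps `Ran Q` into itself. For `d ∈ Ran Q`,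
`dᵀ M d = dᵀ Q d + σ (Q d)ᵀ P (Q d)` is a sum of nonnegative terms, so `M d = 0` forces
`dᵀ Q d = 0`, hence `Q d = 0`, hence `d = 0` because `Ran Q ⊥ Ker Q` for symmetric `Q`.
Thus `M` restricts to an injective, hence bijective, endomorphism of the finite-dimensional
space `Ran Q`, which contains `-g`. -/

open Matrix

theorem LinearMap.existsUnique_mem_apply_eq_of_mapsTo {K V : Type*} [Field K] [AddCommGroup V]
    [Module K V] {S : Submodule K V} [FiniteDimensional K S] {f : V →ₗ[K] V}
    (hS : ∀ x ∈ S, f x ∈ S) (hker : ∀ x ∈ S, f x = 0 → x = 0) {b : V} (hb : b ∈ S) :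
    ∃! x, x ∈ S ∧ f x = b := by
  have hinj : Function.Injective (f.restrict hS) := by
    rw [← LinearMap.ker_eq_bot, LinearMap.ker_eq_bot']
    rintro ⟨x, hx⟩ hfx
    exact Subtype.ext (hker x hx (congrArg Subtype.val hfx))
  obtain ⟨⟨x, hx⟩, hfx⟩ := LinearMap.injective_iff_surjective.mp hinj ⟨b, hb⟩
  have hfx : f x = b := congrArg Subtype.val hfx
  refine ⟨x, ⟨hx, hfx⟩, fun y ⟨hy, hfy⟩ ↦ ?_⟩
  rw [← sub_eq_zero]
  exact hker (y - x) (S.sub_mem hy hx) (by rw [map_sub, hfy, hfx, sub_self])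

namespace Matrix

variable {n : Type*} [Fintype n]

theorem eq_zero_of_mem_range_of_mulVec_eq_zero {R : Type*} [CommRing R] [LinearOrder R]
    [IsStrictOrderedRing R] {Q : Matrix n n R} (hQ : Q.IsSymm) {d : n → R}
    (hd : ∃ y, Q *ᵥ y = d) (hQd : Q *ᵥ d = 0) : d = 0 := by
  obtain ⟨y, rfl⟩ := hd
  rw [← dotProduct_self_eq_zero]
  calc Q *ᵥ y ⬝ᵥ Q *ᵥ y = ((Q *ᵥ y) ᵥ* Qᵀ) ⬝ᵥ y := by
        rw [hQ.eq, dotProduct_mulVec]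
    _ = 0 := by rw [vecMul_transpose, hQd, zero_dotProduct]

variable {R : Type*} [CommRing R] (Q P : Matrix n n R) (σ : R) (d : n → R)

theorem add_smul_mul_mul_mulVec :
    (Q + σ • (Q * P * Q)) *ᵥ d = Q *ᵥ (d + σ • (P *ᵥ (Q *ᵥ d))) := by
  simp only [add_mulVec, smul_mulVec, mulVec_add, mulVec_smul, ← mulVec_mulVec]

theorem dotProduct_add_smul_mul_mul_mulVec {Q} (hQ : Q.IsSymm) :
    d ⬝ᵥ (Q + σ • (Q * P * Q)) *ᵥ d =
      d ⬝ᵥ Q *ᵥ d + σ * (Q *ᵥ d ⬝ᵥ P *ᵥ (Q *ᵥ d)) := by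
  rw [add_smul_mul_mul_mulVec, dotProduct_mulVec, ← mulVec_transpose, hQ.eq,
    dotProduct_add, dotProduct_smul, smul_eq_mul, dotProduct_comm (Q *ᵥ d) d]

theorem PosSemidef.eq_zero_of_mem_range_of_add_smul_mul_mul_mulVec_eq_zero
    {Q P : Matrix n n ℝ} (hQ : Q.PosSemidef) (hP : P.PosSemidef) {σ : ℝ} (hσ : 0 ≤ σ)
    {d : n → ℝ} (hd : ∃ y, Q *ᵥ y = d) (h : (Q + σ • (Q * P * Q)) *ᵥ d = 0) :
    d = 0 := by
  have hsymm : Q.IsSymm := by simpa using hQ.1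
  have hQ_nonneg : 0 ≤ d ⬝ᵥ Q *ᵥ d := by simpa using hQ.dotProduct_mulVec_nonneg d
  have hP_nonneg : 0 ≤ Q *ᵥ d ⬝ᵥ P *ᵥ (Q *ᵥ d) := by
    simpa using hP.dotProduct_mulVec_nonneg (Q *ᵥ d)
  have hquad := dotProduct_add_smul_mul_mul_mulVec P σ d hsymm
  rw [h, dotProduct_zero] at hquad
  have hQ_quad : d ⬝ᵥ Q *ᵥ d = 0 := by nlinarith [mul_nonneg hσ hP_nonneg]
  exact eq_zero_of_mem_range_of_mulVec_eq_zero hsymm hd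
    ((hQ.dotProduct_mulVec_zero_iff d).mp (by simpa using hQ_quad))

end Matrix

/-- The semismooth Newton linear system `(Q + σ Q P Q) d = −g`, `d ∈ Ran(Q)`, has
exactly one solution in the column space of `Q`. -/
theorem newton_system_existsUnique {n : ℕ}
    (Q P : Matrix (Fin n) (Fin n) ℝ) (hQ : Q.PosSemidef) (hP : P.PosSemidef)
    (σ : ℝ) (hσ : 0 < σ) (g : Fin n → ℝ) (hg : ∃ y, Q.mulVec y = g) :
    ∃! dvec : Fin n → ℝ,
      (∃ y, Q.mulVec y = dvec) ∧ (Q + σ • (Q * P * Q)).mulVec dvec = -g := by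
  obtain ⟨y, rfl⟩ := hg
  refine LinearMap.existsUnique_mem_apply_eq_of_mapsTo (S := LinearMap.range Q.mulVecLin)
    (f := (Q + σ • (Q * P * Q)).mulVecLin) ?_ ?_ ⟨-y, mulVec_neg y Q⟩
  · exact fun d _ ↦ ⟨_, (add_smul_mul_mul_mulVec Q P σ d).symm⟩
  · exact fun d hd ↦
      PosSemidef.eq_zero_of_mem_range_of_add_smul_mul_mul_mulVec_eq_zero hQ hP hσ.le hd
end

section
/- Let Q be a symmetric positive semidefinite n×n real matrix, σ > 0, J ⊆ {1,…,n} an index set, and let Σ be the diagonal matrix with Σᵢᵢ = 1 if i ∈ J and Σᵢᵢ = 0 otherwise. Let s ∈ ℝⁿ and set g := Qs. Suppose d̂ lies in the column space Ran(Q) of Q and satisfies (Q + σ Q Σ Q) d̂ = −g, and suppose v : J → ℝ satisfies the p×p linear system σ⁻¹ vᵢ + ∑_{j∈J} Qᵢⱼ vⱼ = gᵢ for every i ∈ J (where p = |J|). Then: (i) for every i ∈ {1,…,n}, (Q d̂)ᵢ = ∑_{j∈J} Qᵢⱼ vⱼ − gᵢ; and (ii) ⟪d̂, Q d̂⟫ =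 ∑_{i∈J} ∑_{j∈J} vᵢ Qᵢⱼ vⱼ − 2 ∑_{i∈J} vᵢ gᵢ + ⟪s, Q s⟫. -/
/-!
Write `u = Q d̂`, `g = Q s` and `1_J` for restriction to `J`, so the Newton equation reads
`u + σ Q 1_J u = -g`. On `J`, adding it to the small system shows that
`w = 1_J u + σ⁻¹ 1_J v` solves `w + σ 1_J Q w = 0`; pairing with `w` (which is supported on `J`)
gives `‖w‖² + σ wᵀQw = 0`, so `w = 0` by positive semidefiniteness. Substituting
`1_J u = -σ⁻¹ 1_J v` back gives `Q d̂ = Q (1_J v - s)`, which is (i), and for symmetric `Q` the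
quadratic form takes the same value at `d̂` and at `1_J v - s`, which expands to (ii).
-/

open Matrix

section Indicator

variable {ι m R : Type*} [Fintype ι] (J : Finset ι)

theorem Matrix.diagonal_ite_mem_mulVec [DecidableEq ι] [NonAssocSemiring R] (x : ι → R) :
    diagonal (fun i => if i ∈ J then (1 : R) else 0) *ᵥ x = (J : Set ι).indicator x := by
  ext i
  by_cases hi : i ∈ J <;> simp [mulVec_diagonal, hi]

theorem Matrix.mulVec_indicator_apply [NonUnitalNonAssocSemiring R] (A : Matrix m ι R)
    (x : ι → R) (i : m) : (A *ᵥ (J : Set ι).indicator x) i = ∑ j ∈ J, A i j * x j := by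
  classical
  simp only [mulVec, dotProduct, Set.indicator_apply, SetLike.mem_coe, mul_ite, mul_zero,
    Finset.sum_ite_mem, Finset.univ_inter]

theorem indicator_dotProduct [NonUnitalNonAssocSemiring R] (x y : ι → R) :
    (J : Set ι).indicator x ⬝ᵥ y = ∑ i ∈ J, x i * y i := by
  classical
  simp only [dotProduct, Set.indicator_apply, SetLike.mem_coe, ite_mul, zero_mul,
    Finset.sum_ite_mem, Finset.univ_inter]

end Indicator

namespace Matrix.IsSymm

variable {ι R : Type*} [Fintype ι] {Q : Matrix ι ι R}

theorem dotProduct_mulVec_comm [CommSemiring R] (hQ : Q.IsSymm) (x y : ι → R) :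
    x ⬝ᵥ Q *ᵥ y = y ⬝ᵥ Q *ᵥ x := by
  rw [dotProduct_mulVec, ← mulVec_transpose, hQ.eq, dotProduct_comm]

theorem dotProduct_mulVec_eq_of_mulVec_eq [CommSemiring R] (hQ : Q.IsSymm) {x y : ι → R}
    (h : Q *ᵥ x = Q *ᵥ y) : x ⬝ᵥ Q *ᵥ x = y ⬝ᵥ Q *ᵥ y := by
  rw [h, hQ.dotProduct_mulVec_comm, h]

theorem sub_dotProduct_mulVec_sub [CommRing R] (hQ : Q.IsSymm) (x y : ι → R) :
    (x - y) ⬝ᵥ Q *ᵥ (x - y) = x ⬝ᵥ Q *ᵥ x - 2 * (x ⬝ᵥ Q *ᵥ y) + y ⬝ᵥ Q *ᵥ y := by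
  simp only [mulVec_sub, sub_dotProduct, dotProduct_sub, hQ.dotProduct_mulVec_comm y x]
  ring

end Matrix.IsSymm

namespace Matrix.PosSemidef

variable {ι : Type*} [Fintype ι] {Q : Matrix ι ι ℝ} {J : Finset ι}

theorem eq_zero_of_add_smul_indicator_mulVec_eq_zero (hQ : Q.PosSemidef) {σ : ℝ} (hσ : 0 ≤ σ)
    {x : ι → ℝ} (h : x + σ • (J : Set ι).indicator (Q *ᵥ x) = 0) : x = 0 := by
  have hx : x = -σ • (J : Set ι).indicator (Q *ᵥ x) := by
    rw [neg_smul, eq_neg_iff_add_eq_zero, h]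
  have hsupp : (J : Set ι).indicator x = x := by
    rw [hx]
    ext i
    by_cases hi : i ∈ J <;> simp [hi]
  have hcross : x ⬝ᵥ (J : Set ι).indicator (Q *ᵥ x) = x ⬝ᵥ Q *ᵥ x := by
    calc x ⬝ᵥ (J : Set ι).indicator (Q *ᵥ x)
        = (J : Set ι).indicator x ⬝ᵥ (J : Set ι).indicator (Q *ᵥ x) := by rw [hsupp]
      _ = (J : Set ι).indicator x ⬝ᵥ Q *ᵥ x := by
        simp only [indicator_dotProduct]
        exact Finset.sum_congr rfl fun i hi => by rw [Set.indicator_of_mem (by simpa using hi)]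
      _ = x ⬝ᵥ Q *ᵥ x := by rw [hsupp]
  have hquad : x ⬝ᵥ x + σ * (x ⬝ᵥ Q *ᵥ x) = 0 := by
    rw [← hcross, ← smul_eq_mul, ← dotProduct_smul, ← dotProduct_add, h, dotProduct_zero]
  have hxx : 0 ≤ x ⬝ᵥ x := Finset.sum_nonneg fun i _ => mul_self_nonneg (x i)
  have hxQx : 0 ≤ x ⬝ᵥ Q *ᵥ x := by simpa using hQ.dotProduct_mulVec_nonneg x
  exact dotProduct_self_eq_zero.mp (by nlinarith [mul_nonneg hσ hxQx])

theorem eq_mulVec_indicator_sub_of_reduced_system (hQ : Q.PosSemidef) {σ : ℝ} (hσ : 0 < σ)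
    {u g v : ι → ℝ} (hu : u + σ • Q *ᵥ (J : Set ι).indicator u = -g)
    (hv : ∀ i ∈ J, σ⁻¹ * v i + (Q *ᵥ (J : Set ι).indicator v) i = g i) :
    u = Q *ᵥ (J : Set ι).indicator v - g := by
  set w := (J : Set ι).indicator u + σ⁻¹ • (J : Set ι).indicator v
  have hw : w + σ • (J : Set ι).indicator (Q *ᵥ w) = 0 := by
    ext i
    by_cases hi : i ∈ J
    · have hui := congrFun hu i
      simp only [Pi.add_apply, Pi.smul_apply, Pi.neg_apply, smul_eq_mul] at hui
      simp only [w, Pi.add_apply, Pi.smul_apply, smul_eq_mul, mulVec_add, mulVec_smul,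
        Set.indicator_of_mem (Finset.mem_coe.mpr hi), Pi.zero_apply]
      linear_combination hui + hv i hi +
        (Q *ᵥ (J : Set ι).indicator v) i * mul_inv_cancel₀ hσ.ne'
    · simp [w, hi]
  have hPu : (J : Set ι).indicator u = -σ⁻¹ • (J : Set ι).indicator v := by
    rw [neg_smul, ← sub_eq_zero, sub_neg_eq_add]
    exact hQ.eq_zero_of_add_smul_indicator_mulVec_eq_zero hσ.le hw
  rw [hPu, mulVec_smul, smul_smul, mul_neg, mul_inv_cancel₀ hσ.ne', neg_one_smul] at hu
  rw [sub_eq_neg_add, ← hu]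
  abel

end Matrix.PosSemidef

theorem newton_system_sparse_reduction_degenerate_general {n : ℕ}
    (Q : Matrix (Fin n) (Fin n) ℝ) (hQ : Q.PosSemidef) (σ : ℝ) (hσ : 0 < σ)
    (J : Finset (Fin n)) (s : Fin n → ℝ) (dhat : Fin n → ℝ)
    (hd : (Q + σ • (Q * Matrix.diagonal (fun i => if i ∈ J then (1 : ℝ) else 0) * Q)).mulVec
        dhat = -(Q.mulVec s))
    (v : Fin n → ℝ)
    (hv : ∀ i ∈ J, σ⁻¹ * v i + ∑ j ∈ J, Q i j * v j = Q.mulVec s i) :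
    (∀ i, Q.mulVec dhat i = (∑ j ∈ J, Q i j * v j) - Q.mulVec s i) ∧
    dhat ⬝ᵥ Q.mulVec dhat =
      (∑ i ∈ J, ∑ j ∈ J, v i * Q i j * v j) - 2 * (∑ i ∈ J, v i * Q.mulVec s i) +
        s ⬝ᵥ Q.mulVec s := by
  have hsymm : Q.IsSymm := isHermitian_iff_isSymm.mp hQ.isHermitian
  have hu : Q *ᵥ dhat + σ • Q *ᵥ (J : Set (Fin n)).indicator (Q *ᵥ dhat) = -(Q *ᵥ s) := by
    rwa [add_mulVec, smul_mulVec, ← mulVec_mulVec, ← mulVec_mulVec,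
      diagonal_ite_mem_mulVec] at hd
  have hQd : Q *ᵥ dhat = Q *ᵥ (J : Set (Fin n)).indicator v - Q *ᵥ s :=
    hQ.eq_mulVec_indicator_sub_of_reduced_system hσ hu fun i hi => by
      rw [mulVec_indicator_apply]
      exact hv i hi
  refine ⟨fun i => by rw [hQd, Pi.sub_apply, mulVec_indicator_apply], ?_⟩
  rw [← mulVec_sub] at hQd
  rw [hsymm.dotProduct_mulVec_eq_of_mulVec_eq hQd, hsymm.sub_dotProduct_mulVec_sub,
    indicator_dotProduct, indicator_dotProduct]
  simp only [mulVec_indicator_apply, Finset.mul_sum, mul_assoc]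

/-- Sparse reduction of the semismooth Newton system, case `aᵀΣa = 0` (`𝒫 = Σ`):
with `g = Qs`, if `d̂ ∈ Ran Q` solves `(Q + σQΣQ)d̂ = −g` and `v` solves the small system
`σ⁻¹vᵢ + ∑_{j∈J} Qᵢⱼvⱼ = gᵢ (i ∈ J)`, then `Qd̂` and `d̂ᵀQd̂` are given by the sparse
formulas. -/
theorem newton_system_sparse_reduction_degenerate {n : ℕ}
    (Q : Matrix (Fin n) (Fin n) ℝ) (hQ : Q.PosSemidef) (σ : ℝ) (hσ : 0 < σ)
    (J : Finset (Fin n)) (s : Fin n → ℝ) (dhat : Fin n → ℝ)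
    (hran : ∃ y, Q.mulVec y = dhat)
    (hd : (Q + σ • (Q * Matrix.diagonal (fun i => if i ∈ J then (1 : ℝ) else 0) * Q)).mulVec
        dhat = -(Q.mulVec s))
    (v : Fin n → ℝ)
    (hv : ∀ i ∈ J, σ⁻¹ * v i + ∑ j ∈ J, Q i j * v j = Q.mulVec s i) :
    (∀ i, Q.mulVec dhat i = (∑ j ∈ J, Q i j * v j) - Q.mulVec s i) ∧
    dhat ⬝ᵥ Q.mulVec dhat =
      (∑ i ∈ J, ∑ j ∈ J, v i * Q i j * v j) - 2 * (∑ i ∈ J, v i * Q.mulVec s i) +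
        s ⬝ᵥ Q.mulVec s :=
  newton_system_sparse_reduction_degenerate_general Q hQ σ hσ J s dhat hd v hv
end

section
/- Let Q be a symmetric positive semidefinite n×n real matrix, σ > 0, a ∈ ℝⁿ, J ⊆ {1,…,n}, and let Σ be the diagonal matrix with Σᵢᵢ = 1 if i ∈ J and Σᵢᵢ = 0 otherwise. Write α := ∑_{i∈J} aᵢ² and ρ := α − σ ∑_{i∈J} ∑_{j∈J} aᵢ Qᵢⱼ aⱼ, and assume α ≠ 0 and ρ ≠ 0. Set P := Σ (I_n − α⁻¹ a aᵀ) Σ. Let s ∈ ℝⁿ, g := Qs, and suppose d̂ lies in the column space Ran(Q) of Q and satisfies (Q + σ Q P Q) d̂ = −g. Suppose v : J → ℝ satisfies, for every i ∈ J, σ⁻¹ vᵢ + ∑_{j∈J} Qᵢⱼ vⱼ + (σ/ρ)(∑_{j∈J} Qᵢⱼ aⱼ)(∑_{k∈J} ∑_{j∈J} aₖ Qₖⱼ vⱼ) = gᵢ + (σ/ρ)(∑_{j∈J} Qᵢⱼ aⱼ)(∑_{j∈J} aⱼ gⱼ). Then, writing β := ∑_{k∈J} ∑_{j∈J} aₖ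 Qₖⱼ vⱼ − ∑_{j∈J} aⱼ gⱼ: (i) for every i ∈ {1,…,n}, (Q d̂)ᵢ = ∑_{j∈J} Qᵢⱼ vⱼ − gᵢ + (σβ/ρ) ∑_{j∈J} Qᵢⱼ aⱼ; and (ii) ⟪d̂, Q d̂⟫ = ∑_{i∈J} ∑_{j∈J} vᵢ Qᵢⱼ vⱼ − 2 ∑_{i∈J} vᵢ gᵢ + ⟪s, Q s⟫ + ((2σα − σ² ∑_{i∈J} ∑_{j∈J} aᵢ Qᵢⱼ aⱼ)/ρ²) β². -/
open Matrix

variable {n : ℕ}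

/-- `α = aᵀΣa = ∑_{i∈J} aᵢ²`. -/
def alphaJ (a : Fin n → ℝ) (J : Finset (Fin n)) : ℝ := ∑ i ∈ J, (a i) ^ 2

/-- `aᵀ_J Q_JJ a_J = ∑_{i,j∈J} aᵢ Qᵢⱼ aⱼ`. -/
def quadJ (Q : Matrix (Fin n) (Fin n) ℝ) (a : Fin n → ℝ) (J : Finset (Fin n)) : ℝ :=
  ∑ i ∈ J, ∑ j ∈ J, a i * Q i j * a j

/-- `ρ = α − σ aᵀ_J Q_JJ a_J`. -/
def rhoJ (Q : Matrix (Fin n) (Fin n) ℝ) (a : Fin n → ℝ) (σ : ℝ) (J : Finset (Fin n)) : ℝ :=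
  alphaJ a J - σ * quadJ Q a J

/-- The 0-1 diagonal matrix `Σ` of the inactive index set `J`. -/
def SigmaJ (J : Finset (Fin n)) : Matrix (Fin n) (Fin n) ℝ :=
  Matrix.diagonal fun i => if i ∈ J then (1 : ℝ) else 0

/-- The HS-Jacobian element `P = Σ(I_n − α⁻¹ a aᵀ)Σ`. -/
noncomputable def Pjac (a : Fin n → ℝ) (J : Finset (Fin n)) :
    Matrix (Fin n) (Fin n) ℝ :=
  SigmaJ J * ((1 : Matrix (Fin n) (Fin n) ℝ) - (alphaJ a J)⁻¹ • vecMulVec a a) * SigmaJ J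

/-- `β = aᵀ_J Q_JJ v_J − aᵀ_J g_J`. -/
def betaJ (Q : Matrix (Fin n) (Fin n) ℝ) (a v g : Fin n → ℝ) (J : Finset (Fin n)) : ℝ :=
  (∑ k ∈ J, ∑ j ∈ J, a k * Q k j * v j) - ∑ j ∈ J, a j * g j

/-! The candidate `t := Σv − s + (σβ/ρ) Σa` solves the Newton system: the reduced system says
exactly that `Σ(Qt) = −σ⁻¹ Σv`, while `⟪Σa, Qt⟫ = β + (σβ/ρ) aᵀΣQΣa = αβ/ρ`, hence
`𝒫Qt = −σ⁻¹ Σv − (β/ρ) Σa` and `(Q + σQ𝒫Q)t = −Qs`. Both `Q` and `𝒫` are positive semidefinite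
(for `𝒫` this is Cauchy–Schwarz), so `⟪w, (Q + σQ𝒫Q)w⟫ = 0` forces `Qw = 0`. Therefore
`Qd̂ = Qt` and `⟪d̂, Qd̂⟫ = ⟪t, Qt⟫`, and both sides are expanded in terms of `v`, `s` and `a`. -/

theorem Matrix.IsSymm.dotProduct_mulVec_comm_s19 {ι R : Type*} [Fintype ι] [CommSemiring R]
    {Q : Matrix ι ι R} (hQ : Q.IsSymm) (x y : ι → R) : x ⬝ᵥ Q *ᵥ y = y ⬝ᵥ Q *ᵥ x := by
  rw [dotProduct_mulVec, ← mulVec_transpose, hQ.eq, dotProduct_comm]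

theorem Matrix.IsSymm.dotProduct_mulVec_self_eq_of_mulVec_eq {ι R : Type*} [Fintype ι]
    [CommSemiring R] {Q : Matrix ι ι R} (hQ : Q.IsSymm) {x y : ι → R} (h : Q *ᵥ x = Q *ᵥ y) :
    x ⬝ᵥ Q *ᵥ x = y ⬝ᵥ Q *ᵥ y := by
  rw [h, hQ.dotProduct_mulVec_comm_s19 x y, h]

theorem Matrix.PosSemidef.mulVec_eq_of_add_smul_mul_mul_mulVec_eq {ι : Type*} [Fintype ι]
    {Q P : Matrix ι ι ℝ} (hQ : Q.PosSemidef) (hP : ∀ u, 0 ≤ u ⬝ᵥ P *ᵥ u) {σ : ℝ} (hσ : 0 ≤ σ)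
    {x y : ι → ℝ} (h : (Q + σ • (Q * P * Q)) *ᵥ x = (Q + σ • (Q * P * Q)) *ᵥ y) :
    Q *ᵥ x = Q *ᵥ y := by
  set w := x - y
  have hw : (Q + σ • (Q * P * Q)) *ᵥ w = 0 := by rw [mulVec_sub, h, sub_self]
  have hsplit : w ⬝ᵥ (Q + σ • (Q * P * Q)) *ᵥ w =
      w ⬝ᵥ Q *ᵥ w + σ * ((Q *ᵥ w) ⬝ᵥ P *ᵥ (Q *ᵥ w)) := by
    rw [add_mulVec, dotProduct_add, smul_mulVec, dotProduct_smul, smul_eq_mul,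
      ← mulVec_mulVec, ← mulVec_mulVec,
      (isHermitian_iff_isSymm.mp hQ.1).dotProduct_mulVec_comm_s19 w (P *ᵥ (Q *ᵥ w)),
      dotProduct_comm (P *ᵥ _)]
  have hQw : w ⬝ᵥ Q *ᵥ w = 0 := by
    have hQ_nonneg : 0 ≤ w ⬝ᵥ Q *ᵥ w := by simpa using hQ.dotProduct_mulVec_nonneg w
    have hP_nonneg := mul_nonneg hσ (hP (Q *ᵥ w))
    rw [hw, dotProduct_zero] at hsplit
    linarith
  rw [← sub_eq_zero, ← mulVec_sub]
  exact (hQ.dotProduct_mulVec_zero_iff w).mp (by simpa using hQw)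

section SigmaJMulVec

variable (J : Finset (Fin n))

theorem SigmaJ_mulVec_apply (x : Fin n → ℝ) (i : Fin n) :
    (SigmaJ J *ᵥ x) i = if i ∈ J then x i else 0 := by
  simp [SigmaJ, mulVec_diagonal]

theorem dotProduct_SigmaJ_mulVec (x y : Fin n → ℝ) :
    x ⬝ᵥ SigmaJ J *ᵥ y = ∑ j ∈ J, x j * y j := by
  simp [dotProduct, SigmaJ_mulVec_apply, Finset.sum_ite_mem]

theorem SigmaJ_mulVec_dotProduct (x y : Fin n → ℝ) :
    (SigmaJ J *ᵥ x) ⬝ᵥ y = ∑ j ∈ J, x j * y j := by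
  simp [dotProduct, SigmaJ_mulVec_apply, Finset.sum_ite_mem]

theorem mulVec_SigmaJ_mulVec_apply {m : Type*} (M : Matrix m (Fin n) ℝ) (x : Fin n → ℝ) (i : m) :
    (M *ᵥ (SigmaJ J *ᵥ x)) i = ∑ j ∈ J, M i j * x j :=
  dotProduct_SigmaJ_mulVec J _ x

theorem SigmaJ_mulVec_dotProduct_mulVec_SigmaJ_mulVec (M : Matrix (Fin n) (Fin n) ℝ)
    (x y : Fin n → ℝ) :
    (SigmaJ J *ᵥ x) ⬝ᵥ M *ᵥ (SigmaJ J *ᵥ y) = ∑ i ∈ J, ∑ j ∈ J, x i * M i j * y j := by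
  simp_rw [SigmaJ_mulVec_dotProduct, mulVec_SigmaJ_mulVec_apply, Finset.mul_sum, mul_assoc]

theorem SigmaJ_mulVec_SigmaJ_mulVec (x : Fin n → ℝ) :
    SigmaJ J *ᵥ (SigmaJ J *ᵥ x) = SigmaJ J *ᵥ x := by
  ext i
  by_cases hi : i ∈ J <;> simp [SigmaJ_mulVec_apply, hi]

end SigmaJMulVec

theorem quadJ_eq_dotProduct (Q : Matrix (Fin n) (Fin n) ℝ) (a : Fin n → ℝ) (J : Finset (Fin n)) :
    quadJ Q a J = (SigmaJ J *ᵥ a) ⬝ᵥ Q *ᵥ (SigmaJ J *ᵥ a) :=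
  (SigmaJ_mulVec_dotProduct_mulVec_SigmaJ_mulVec J Q a a).symm

theorem betaJ_eq_dotProduct (Q : Matrix (Fin n) (Fin n) ℝ) (a v g : Fin n → ℝ)
    (J : Finset (Fin n)) :
    betaJ Q a v g J =
      (SigmaJ J *ᵥ a) ⬝ᵥ Q *ᵥ (SigmaJ J *ᵥ v) - (SigmaJ J *ᵥ a) ⬝ᵥ g := by
  rw [betaJ, SigmaJ_mulVec_dotProduct_mulVec_SigmaJ_mulVec, SigmaJ_mulVec_dotProduct]

theorem Pjac_mulVec (a : Fin n → ℝ) (J : Finset (Fin n)) (u : Fin n → ℝ) :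
    Pjac a J *ᵥ u =
      SigmaJ J *ᵥ u - ((alphaJ a J)⁻¹ * (SigmaJ J *ᵥ a) ⬝ᵥ u) • SigmaJ J *ᵥ a := by
  rw [Pjac, ← mulVec_mulVec, ← mulVec_mulVec, sub_mulVec, one_mulVec, smul_mulVec,
    vecMulVec_mulVec, op_smul_eq_smul, mulVec_sub, mulVec_smul, mulVec_smul,
    SigmaJ_mulVec_SigmaJ_mulVec, smul_smul, dotProduct_SigmaJ_mulVec, SigmaJ_mulVec_dotProduct]

theorem dotProduct_Pjac_mulVec_nonneg (a : Fin n → ℝ) (J : Finset (Fin n)) (u : Fin n → ℝ) :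
    0 ≤ u ⬝ᵥ Pjac a J *ᵥ u := by
  have hα : 0 ≤ alphaJ a J := Finset.sum_nonneg fun i _ => sq_nonneg (a i)
  rw [Pjac_mulVec, dotProduct_sub, dotProduct_smul, smul_eq_mul, dotProduct_SigmaJ_mulVec,
    dotProduct_SigmaJ_mulVec, SigmaJ_mulVec_dotProduct, sub_nonneg]
  calc (alphaJ a J)⁻¹ * (∑ j ∈ J, a j * u j) * ∑ j ∈ J, u j * a j
      = (∑ j ∈ J, a j * u j) ^ 2 / alphaJ a J := by simp_rw [mul_comm (u _)]; ring
    _ ≤ ∑ j ∈ J, u j ^ 2 :=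
      div_le_of_le_mul₀ hα (Finset.sum_nonneg fun j _ => sq_nonneg (u j))
        ((Finset.sum_mul_sq_le_sq_mul_sq J a u).trans_eq (mul_comm _ _))
    _ = ∑ j ∈ J, u j * u j := by simp_rw [sq]

section SparseNewtonDirection

variable (Q : Matrix (Fin n) (Fin n) ℝ) (σ : ℝ) (a v s : Fin n → ℝ) (J : Finset (Fin n))

def SolvesReducedSystem : Prop :=
  ∀ i ∈ J,
    σ⁻¹ * v i + (∑ j ∈ J, Q i j * v j) +
        σ / rhoJ Q a σ J * (∑ j ∈ J, Q i j * a j) * (∑ k ∈ J, ∑ j ∈ J, a k * Q k j * v j) =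
      (Q *ᵥ s) i + σ / rhoJ Q a σ J * (∑ j ∈ J, Q i j * a j) * (∑ j ∈ J, a j * (Q *ᵥ s) j)

noncomputable def sparseNewtonDirection : Fin n → ℝ :=
  SigmaJ J *ᵥ v - s + (σ * betaJ Q a v (Q *ᵥ s) J / rhoJ Q a σ J) • SigmaJ J *ᵥ a

theorem mulVec_sparseNewtonDirection :
    Q *ᵥ sparseNewtonDirection Q σ a v s J =
      Q *ᵥ (SigmaJ J *ᵥ v) - Q *ᵥ s +
        (σ * betaJ Q a v (Q *ᵥ s) J / rhoJ Q a σ J) • Q *ᵥ (SigmaJ J *ᵥ a) := by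
  rw [sparseNewtonDirection, mulVec_add, mulVec_sub, mulVec_smul]

theorem mulVec_sparseNewtonDirection_apply (i : Fin n) :
    (Q *ᵥ sparseNewtonDirection Q σ a v s J) i =
      (∑ j ∈ J, Q i j * v j) - (Q *ᵥ s) i +
        σ * betaJ Q a v (Q *ᵥ s) J / rhoJ Q a σ J * (∑ j ∈ J, Q i j * a j) := by
  rw [mulVec_sparseNewtonDirection]
  simp only [Pi.add_apply, Pi.sub_apply, Pi.smul_apply, smul_eq_mul, mulVec_SigmaJ_mulVec_apply]

theorem SigmaJ_mulVec_dotProduct_mulVec_sparseNewtonDirection (hρ : rhoJ Q a σ J ≠ 0) :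
    (SigmaJ J *ᵥ a) ⬝ᵥ Q *ᵥ sparseNewtonDirection Q σ a v s J =
      alphaJ a J * betaJ Q a v (Q *ᵥ s) J / rhoJ Q a σ J := by
  rw [mulVec_sparseNewtonDirection, dotProduct_add, dotProduct_sub, dotProduct_smul, smul_eq_mul,
    ← betaJ_eq_dotProduct, ← quadJ_eq_dotProduct]
  rw [rhoJ] at hρ ⊢
  field_simp
  ring

theorem SigmaJ_mulVec_mulVec_sparseNewtonDirection
    (hv : SolvesReducedSystem Q σ a v s J) :
    SigmaJ J *ᵥ (Q *ᵥ sparseNewtonDirection Q σ a v s J) = -σ⁻¹ • SigmaJ J *ᵥ v := by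
  ext i
  simp only [SigmaJ_mulVec_apply, Pi.smul_apply, smul_eq_mul]
  split_ifs with hi
  · rw [mulVec_sparseNewtonDirection_apply, betaJ]
    linear_combination hv i hi
  · simp

theorem Pjac_mulVec_mulVec_sparseNewtonDirection (hα : alphaJ a J ≠ 0) (hρ : rhoJ Q a σ J ≠ 0)
    (hv : SolvesReducedSystem Q σ a v s J) :
    Pjac a J *ᵥ (Q *ᵥ sparseNewtonDirection Q σ a v s J) =
      -σ⁻¹ • SigmaJ J *ᵥ v - (betaJ Q a v (Q *ᵥ s) J / rhoJ Q a σ J) • SigmaJ J *ᵥ a := by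
  rw [Pjac_mulVec, SigmaJ_mulVec_mulVec_sparseNewtonDirection Q σ a v s J hv,
    SigmaJ_mulVec_dotProduct_mulVec_sparseNewtonDirection Q σ a v s J hρ]
  field_simp

theorem newtonMatrix_mulVec_sparseNewtonDirection (hσ : σ ≠ 0) (hα : alphaJ a J ≠ 0)
    (hρ : rhoJ Q a σ J ≠ 0)
    (hv : SolvesReducedSystem Q σ a v s J) :
    (Q + σ • (Q * Pjac a J * Q)) *ᵥ sparseNewtonDirection Q σ a v s J = -(Q *ᵥ s) := by
  rw [add_mulVec, smul_mulVec, ← mulVec_mulVec, ← mulVec_mulVec,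
    Pjac_mulVec_mulVec_sparseNewtonDirection Q σ a v s J hα hρ hv, mulVec_sparseNewtonDirection,
    mulVec_sub, mulVec_smul, mulVec_smul]
  ext i
  simp only [Pi.add_apply, Pi.sub_apply, Pi.smul_apply, Pi.neg_apply, smul_eq_mul]
  field_simp
  ring

theorem sparseNewtonDirection_dotProduct_mulVec (hQ : Q.IsSymm) (hρ : rhoJ Q a σ J ≠ 0) :
    sparseNewtonDirection Q σ a v s J ⬝ᵥ Q *ᵥ sparseNewtonDirection Q σ a v s J =
      (∑ i ∈ J, ∑ j ∈ J, v i * Q i j * v j) - 2 * (∑ i ∈ J, v i * (Q *ᵥ s) i) +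
        s ⬝ᵥ Q *ᵥ s +
        (2 * σ * alphaJ a J - σ ^ 2 * quadJ Q a J) / (rhoJ Q a σ J) ^ 2 *
          (betaJ Q a v (Q *ᵥ s) J) ^ 2 := by
  rw [← SigmaJ_mulVec_dotProduct_mulVec_SigmaJ_mulVec, ← SigmaJ_mulVec_dotProduct,
    mulVec_sparseNewtonDirection, sparseNewtonDirection]
  simp only [dotProduct_add, dotProduct_sub, dotProduct_smul, add_dotProduct, sub_dotProduct,
    smul_dotProduct, smul_eq_mul, betaJ_eq_dotProduct, rhoJ, quadJ_eq_dotProduct] at hρ ⊢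
  rw [hQ.dotProduct_mulVec_comm_s19 s, hQ.dotProduct_mulVec_comm_s19 s (SigmaJ J *ᵥ a),
    hQ.dotProduct_mulVec_comm_s19 (SigmaJ J *ᵥ v) (SigmaJ J *ᵥ a)]
  field_simp
  ring

end SparseNewtonDirection

theorem newton_system_sparse_reduction_nondegenerate_general
    (Q : Matrix (Fin n) (Fin n) ℝ) (hQ : Q.PosSemidef) (σ : ℝ) (hσ : 0 < σ)
    (a : Fin n → ℝ) (J : Finset (Fin n))
    (hα : alphaJ a J ≠ 0) (hρ : rhoJ Q a σ J ≠ 0)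
    (s : Fin n → ℝ) (dhat : Fin n → ℝ)
    (hd : (Q + σ • (Q * Pjac a J * Q)).mulVec dhat = -(Q.mulVec s))
    (v : Fin n → ℝ)
    (hv : ∀ i ∈ J,
      σ⁻¹ * v i + (∑ j ∈ J, Q i j * v j) +
          σ / rhoJ Q a σ J * (∑ j ∈ J, Q i j * a j) *
            (∑ k ∈ J, ∑ j ∈ J, a k * Q k j * v j) =
        Q.mulVec s i +
          σ / rhoJ Q a σ J * (∑ j ∈ J, Q i j * a j) * (∑ j ∈ J, a j * Q.mulVec s j)) :
    (∀ i, Q.mulVec dhat i =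
      (∑ j ∈ J, Q i j * v j) - Q.mulVec s i +
        σ * betaJ Q a v (Q.mulVec s) J / rhoJ Q a σ J * (∑ j ∈ J, Q i j * a j)) ∧
    dhat ⬝ᵥ Q.mulVec dhat =
      (∑ i ∈ J, ∑ j ∈ J, v i * Q i j * v j) - 2 * (∑ i ∈ J, v i * Q.mulVec s i) +
        s ⬝ᵥ Q.mulVec s +
        (2 * σ * alphaJ a J - σ ^ 2 * quadJ Q a J) / (rhoJ Q a σ J) ^ 2 *
          (betaJ Q a v (Q.mulVec s) J) ^ 2 := by
  have hQsymm : Q.IsSymm := isHermitian_iff_isSymm.mp hQ.1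
  have hQd : Q *ᵥ dhat = Q *ᵥ sparseNewtonDirection Q σ a v s J :=
    hQ.mulVec_eq_of_add_smul_mul_mul_mulVec_eq (dotProduct_Pjac_mulVec_nonneg a J) hσ.le
      (hd.trans (newtonMatrix_mulVec_sparseNewtonDirection Q σ a v s J hσ.ne' hα hρ hv).symm)
  refine ⟨fun i => ?_, ?_⟩
  · rw [hQd, mulVec_sparseNewtonDirection_apply]
  · rw [hQsymm.dotProduct_mulVec_self_eq_of_mulVec_eq hQd,
      sparseNewtonDirection_dotProduct_mulVec Q σ a v s J hQsymm hρ]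

/-- Sparse reduction of the semismooth Newton system, case `aᵀΣa ≠ 0`
(`𝒫 = Σ(I − α⁻¹aaᵀ)Σ`): with `g = Qs`, if `d̂ ∈ Ran Q` solves `(Q + σQ𝒫Q)d̂ = −g` and `v`
solves the small `p × p` system, then `Qd̂` and `d̂ᵀQd̂` are given by the sparse formulas. -/
theorem newton_system_sparse_reduction_nondegenerate
    (Q : Matrix (Fin n) (Fin n) ℝ) (hQ : Q.PosSemidef) (σ : ℝ) (hσ : 0 < σ)
    (a : Fin n → ℝ) (J : Finset (Fin n))
    (hα : alphaJ a J ≠ 0) (hρ : rhoJ Q a σ J ≠ 0)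
    (s : Fin n → ℝ) (dhat : Fin n → ℝ)
    (hran : ∃ y, Q.mulVec y = dhat)
    (hd : (Q + σ • (Q * Pjac a J * Q)).mulVec dhat = -(Q.mulVec s))
    (v : Fin n → ℝ)
    (hv : ∀ i ∈ J,
      σ⁻¹ * v i + (∑ j ∈ J, Q i j * v j) +
          σ / rhoJ Q a σ J * (∑ j ∈ J, Q i j * a j) *
            (∑ k ∈ J, ∑ j ∈ J, a k * Q k j * v j) =
        Q.mulVec s i +
          σ / rhoJ Q a σ J * (∑ j ∈ J, Q i j * a j) * (∑ j ∈ J, a j * Q.mulVec s j)) :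
    (∀ i, Q.mulVec dhat i =
      (∑ j ∈ J, Q i j * v j) - Q.mulVec s i +
        σ * betaJ Q a v (Q.mulVec s) J / rhoJ Q a σ J * (∑ j ∈ J, Q i j * a j)) ∧
    dhat ⬝ᵥ Q.mulVec dhat =
      (∑ i ∈ J, ∑ j ∈ J, v i * Q i j * v j) - 2 * (∑ i ∈ J, v i * Q.mulVec s i) +
        s ⬝ᵥ Q.mulVec s +
        (2 * σ * alphaJ a J - σ ^ 2 * quadJ Q a J) / (rhoJ Q a σ J) ^ 2 *
          (betaJ Q a v (Q.mulVec s) J) ^ 2 :=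
  newton_system_sparse_reduction_nondegenerate_general Q hQ σ hσ a J hα hρ s dhat hd v hv
end
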